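/- arXiv:1004.3928 — 7 statements merged into one kernel-verified Lean document; each statement's English description precedes it below -/
import Mathlib

section
/- Suppose a, b, c are non-negative integers with a + b + c ≤ n. Then w_{a,b+c} is the composite permutation obtained by applying w_{a,b} first and then w^{⟨b⟩}_{a,c}, and the lengths add: ℓ(w_{a,b+c}) = ℓ(w_{a,b}) + ℓ(w^{⟨b⟩}_{a,c}). -/
namespace SymStmt

/-- The simple transposition `s_i = (i, i+1)`, as a permutation of `ℕ`
(only the indices `1 ≤ i < n` are ever used). -/
def s (i : ℕ) : Equiv.Perm ℕ := Equiv.swap i (i + 1)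

/-- `w^{⟨k⟩}_{a,b} = (s_{a+b+k-1} s_{a+b+k-2} ⋯ s_{k+1})^b`, where in a word the leftmost
letter is applied first; thus the underlying cycle is `s_{k+1} ∘ s_{k+2} ∘ ⋯ ∘ s_{a+b+k-1}`,
i.e. the product of the list `[s_{k+1}, s_{k+2}, …, s_{a+b+k-1}]`. -/
def wk (k a b : ℕ) : Equiv.Perm ℕ :=
  (((List.range (a + b - 1)).map fun j => s (k + 1 + j)).prod) ^ b

/-- The length of `w` as an element of `S_n`: the number of inversions
`#{(i,j) : 1 ≤ i < j ≤ n, w i > w j}`. -/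
def len (n : ℕ) (w : Equiv.Perm ℕ) : ℕ :=
  ((Finset.Icc 1 n ×ˢ Finset.Icc 1 n).filter fun x => x.1 < x.2 ∧ w x.2 < w x.1).card

/-- Partial sums `b_i^j = b_i + b_{i+1} + ⋯ + b_j` (equal to `0` if `i > j`). -/
def Bsum (b : ℕ → ℕ) (i j : ℕ) : ℕ := ∑ t ∈ Finset.Icc i j, b t

/-- `w_b` for a composition `b = (b_1, …, b_p)`: the composite obtained by applying
`w^{⟨b_1^{t-1}⟩}_{b_t, b_{t+1}^p}` successively for `t = p-1, p-2, …, 1` (the factor with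
`t = p-1` applied first, the factor with `t = 1` applied last). -/
def wcomp (p : ℕ) (b : ℕ → ℕ) : Equiv.Perm ℕ :=
  ((List.range (p - 1)).map fun x => wk (Bsum b 1 x) (b (x + 1)) (Bsum b (x + 2) p)).prod


lemma s_apply (i x : ℕ) : s i x = if x = i then i + 1 else if x = i + 1 then i else x := by
  simp [s, Equiv.swap_apply_def]

lemma cyc_apply (k L x : ℕ) :
    (((List.range L).map fun j => s (k + 1 + j)).prod) x =
      if x = k + L + 1 then k + 1 else if k + 1 ≤ x ∧ x ≤ k + L then x + 1 else x := by
  induction L generalizing x with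
  | zero => simp; split_ifs <;> omega
  | succ L ih =>
    rw [List.range_succ, List.map_append, List.prod_append]
    simp only [List.map_cons, List.map_nil, List.prod_cons, List.prod_nil, mul_one,
      Equiv.Perm.mul_apply]
    rw [s_apply]
    split_ifs with h1 h2 <;> rw [ih] <;> split_ifs <;> omega

lemma cyc_pow (k L m x : ℕ) :
    ((((List.range L).map fun j => s (k + 1 + j)).prod) ^ m) x =
      if k + 1 ≤ x ∧ x ≤ k + L + 1 then k + 1 + ((x - (k + 1) + m) % (L + 1)) else x := by
  induction m generalizing x with
  | zero =>
    simp only [pow_zero, Equiv.Perm.one_apply]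
    split_ifs with h
    · rw [Nat.add_zero, Nat.mod_eq_of_lt (by omega)]; omega
    · rfl
  | succ m ih =>
    rw [pow_succ, Equiv.Perm.mul_apply, cyc_apply, ih]
    split_ifs with h1 h2 h3 h4 h5 h6 <;> try omega
    all_goals try { congr 2; omega }
    all_goals
      rw [show k + 1 - (k + 1) + m = m by omega,
        show x - (k + 1) + (m + 1) = (L + 1) + m by omega, Nat.add_mod_left]

lemma wk_apply (k a b x : ℕ) :
    wk k a b x = if k < x ∧ x ≤ k + a then x + b
      else if k + a < x ∧ x ≤ k + a + b then x - a else x := by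
  rcases Nat.eq_zero_or_pos b with rfl | hb
  · simp only [wk, pow_zero, Equiv.Perm.one_apply]
    split_ifs <;> omega
  · have hL : a + b - 1 + 1 = a + b := by omega
    rw [wk, cyc_pow]
    split_ifs with h1 h2 h3 h4 h5 <;> try omega
    · -- k+1 ≤ x ≤ k+a : value x + b
      have : (x - (k + 1) + b) % (a + b - 1 + 1) = x - (k + 1) + b := by
        rw [Nat.mod_eq_of_lt (by omega)]
      rw [this]; omega
    · -- k+a < x ≤ k+a+b : value x - a
      have h6 : x - (k + 1) + b = (a + b - 1 + 1) + (x - (k + a + 1)) := by omega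
      rw [h6, Nat.add_mod_left, Nat.mod_eq_of_lt (by omega)]
      omega

lemma len_wk (n k a m : ℕ) (h : k + a + m ≤ n) : len n (wk k a m) = a * m := by
  have : ((Finset.Icc 1 n ×ˢ Finset.Icc 1 n).filter
      fun x => x.1 < x.2 ∧ wk k a m x.2 < wk k a m x.1) =
      Finset.Icc (k + 1) (k + a) ×ˢ Finset.Icc (k + a + 1) (k + a + m) := by
    ext ⟨i, j⟩
    simp only [Finset.mem_filter, Finset.mem_product, Finset.mem_Icc, wk_apply]
    constructor
    · rintro ⟨⟨⟨hi1, hi2⟩, hj1, hj2⟩, hij, hlt⟩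
      split_ifs at hlt <;> omega
    · rintro ⟨⟨hi1, hi2⟩, hj1, hj2⟩
      refine ⟨⟨⟨by omega, by omega⟩, by omega, by omega⟩, by omega, ?_⟩
      split_ifs <;> omega
  rw [len, this, Finset.card_product, Nat.card_Icc, Nat.card_Icc]
  congr 1 <;> omega

end SymStmt

open SymStmt in
/-- Suppose `a, b, c` are non-negative integers with `a + b + c <= n`.  Then `w_{a,b+c}` is the
composite permutation obtained by applying `w_{a,b}` first and then `w^{<b>}_{a,c}`, and the
lengths add. -/
theorem stmt_3 (n : ℕ) (hn : 1 ≤ n) (a b c : ℕ) (habc : a + b + c ≤ n) :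
    wk 0 a (b + c) = wk b a c * wk 0 a b ∧
      len n (wk 0 a (b + c)) = len n (wk 0 a b) + len n (wk b a c) := by
  constructor
  · ext x
    simp only [Equiv.Perm.mul_apply, wk_apply]
    split_ifs <;> omega
  · rw [len_wk n 0 a (b + c) (by omega), len_wk n 0 a b (by omega),
      len_wk n b a c (by omega)]
    ring
end

section
/- Suppose a, b, c are non-negative integers with a + b + c ≤ n. Then w_{a+b,c} is the composite permutation obtained by applying w^{⟨a⟩}_{b,c} first and then w_{a,c}, and the lengths add: ℓ(w_{a+b,c}) = ℓ(w^{⟨a⟩}_{b,c}) + ℓ(w_{a,c}). -/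
namespace Stmt4Aux
open SymStmt

/-- The cycle `s_{k+1} ∘ s_{k+2} ∘ ⋯ ∘ s_{k+m}`. -/
def C (k m : ℕ) : Equiv.Perm ℕ := ((List.range m).map fun j => s (k + 1 + j)).prod

lemma C_apply (k m : ℕ) : ∀ x, C k m x =
    if k + 1 ≤ x ∧ x ≤ k + m then x + 1 else if x = k + m + 1 then k + 1 else x := by
  induction m with
  | zero =>
    intro x
    simp only [C, List.range_zero, List.map_nil, List.prod_nil, Equiv.Perm.coe_one, id_eq]
    split_ifs <;> omega
  | succ m ih =>
    intro x
    have hC : C k (m + 1) = C k m * s (k + 1 + m) := by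
      simp [C, List.range_succ]
    rw [hC, Equiv.Perm.mul_apply, s, Equiv.swap_apply_def, ih]
    split_ifs <;> omega

lemma Cpow_apply (k m : ℕ) : ∀ t, t ≤ m + 1 → ∀ x, (C k m ^ t) x =
    if k + 1 ≤ x ∧ x ≤ k + m + 1 - t then x + t
    else if k + m + 2 - t ≤ x ∧ x ≤ k + m + 1 then x + t - (m + 1) else x := by
  intro t
  induction t with
  | zero =>
    intro _ x
    simp only [pow_zero, Equiv.Perm.coe_one, id_eq]
    split_ifs <;> omega
  | succ t ih =>
    intro ht x
    rw [pow_succ', Equiv.Perm.mul_apply, ih (by omega), C_apply]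
    split_ifs <;> omega

lemma wk_apply (k a b : ℕ) (x : ℕ) : wk k a b x =
    if k + 1 ≤ x ∧ x ≤ k + a then x + b
    else if k + a + 1 ≤ x ∧ x ≤ k + a + b then x + b - (a + b) else x := by
  have h : wk k a b = C k (a + b - 1) ^ b := rfl
  rw [h, Cpow_apply k (a + b - 1) b (by omega)]
  split_ifs <;> omega

lemma len_wk (n k a b : ℕ) (h : k + a + b ≤ n) :
    len n (wk k a b) = a * b := by
  have : ((Finset.Icc 1 n ×ˢ Finset.Icc 1 n).filter
      fun x => x.1 < x.2 ∧ wk k a b x.2 < wk k a b x.1)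
      = Finset.Icc (k + 1) (k + a) ×ˢ Finset.Icc (k + a + 1) (k + a + b) := by
    ext ⟨i, j⟩
    simp only [Finset.mem_filter, Finset.mem_product, Finset.mem_Icc, wk_apply]
    split_ifs <;> omega
  rw [len, this, Finset.card_product, Nat.card_Icc, Nat.card_Icc]
  have h1 : k + a + 1 - (k + 1) = a := by omega
  have h2 : k + a + b + 1 - (k + a + 1) = b := by omega
  rw [h1, h2]

end Stmt4Aux

open SymStmt in
/-- Suppose `a, b, c` are non-negative integers with `a + b + c <= n`.  Then `w_{a+b,c}` is the
composite permutation obtained by applying `w^{<a>}_{b,c}` first and then `w_{a,c}`, and the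
lengths add. -/
theorem stmt_4 (n : ℕ) (hn : 1 ≤ n) (a b c : ℕ) (habc : a + b + c ≤ n) :
    wk 0 (a + b) c = wk 0 a c * wk a b c ∧
      len n (wk 0 (a + b) c) = len n (wk a b c) + len n (wk 0 a c) := by
  constructor
  · ext x
    rw [Equiv.Perm.mul_apply, Stmt4Aux.wk_apply, Stmt4Aux.wk_apply, Stmt4Aux.wk_apply]
    split_ifs <;> omega
  · rw [Stmt4Aux.len_wk n 0 (a + b) c (by omega), Stmt4Aux.len_wk n a b c (by omega),
      Stmt4Aux.len_wk n 0 a c (by omega), Nat.add_mul]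
    omega
end

section
/- Let b = (b_1, …, b_p) be a composition of n into p non-negative parts. Then the permutation w_b sends b_1^{t−1} + i to b_{t+1}^p + i for all 1 ≤ t ≤ p and 1 ≤ i ≤ b_t (where b_1^0 = 0 and b_{p+1}^p = 0); that is, w_b moves the t-th block of positions of sizes b_1, …, b_p to the positions occupied by the blocks after it. -/
/-! The factor `w^{⟨k⟩}_{a,b}` is the `b`-th power of the cycle rotating `(k, k + a + b]` one
step up: it fixes every position `≤ k`, moves `k + 1, …, k + a` up by `b`, and moves
`k + a + 1, …, k + a + b` down to `k + 1, …, k + b`. Hence the composite of the factors with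
`t > q` fixes every position `≤ b_1^q`, and by downward induction on `q` it sends position
`b_1^{t-1} + i` of a block `t > q` to `b_1^q + b_{t+1}^p + i`; the case `q = 0` is the theorem. -/

namespace SymStmt

def cycle (k m : ℕ) : Equiv.Perm ℕ := ((List.range m).map fun j => s (k + 1 + j)).prod

theorem cycle_succ (k m : ℕ) : cycle k (m + 1) = cycle k m * s (k + 1 + m) := by
  simp only [cycle, List.range_succ, List.map_append, List.prod_append, List.map_singleton,
    List.prod_singleton]

theorem cycle_apply (k m x : ℕ) :
    cycle k m x = if k < x ∧ x ≤ k + m then x + 1 else if x = k + m + 1 then k + 1 else x := by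
  induction m generalizing x with
  | zero =>
    simp only [cycle, List.range_zero, List.map_nil, List.prod_nil, Equiv.Perm.one_apply]
    split_ifs <;> omega
  | succ m ih =>
    rw [cycle_succ, Equiv.Perm.mul_apply, s, Equiv.swap_apply_def]
    split_ifs <;> simp only [ih] <;> split_ifs <;> omega

theorem cycle_pow_apply_add (k m j e : ℕ) (hj : 1 ≤ j) (hje : j + e ≤ m + 1) :
    (cycle k m ^ e) (k + j) = k + j + e := by
  induction e with
  | zero => rfl
  | succ e ih =>
    rw [pow_succ', Equiv.Perm.mul_apply, ih (by omega), cycle_apply, if_pos (by omega)]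
    rfl

theorem wk_apply_of_le (k a b x : ℕ) (hx : x ≤ k) : wk k a b x = x := by
  have hfix : cycle k (a + b - 1) ∈ MulAction.stabilizer (Equiv.Perm ℕ) x := by
    rw [MulAction.mem_stabilizer_iff, Equiv.Perm.smul_def, cycle_apply]
    split_ifs <;> omega
  exact pow_mem hfix b

theorem wk_apply_add_left (k a b i : ℕ) (hi : 1 ≤ i) (hia : i ≤ a) :
    wk k a b (k + i) = k + b + i := by
  rw [wk, ← cycle, cycle_pow_apply_add k _ i b hi (by omega)]
  omega

/-- The last `b` positions wrap around: `b - i` steps up to the top `k + a + b`, one step to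
`k + 1`, then `i - 1` more steps. -/
theorem wk_apply_add_right (k a b i : ℕ) (hi : 1 ≤ i) (hib : i ≤ b) :
    wk k a b (k + a + i) = k + i := by
  have hsplit : b = (i - 1) + 1 + (b - i) := by omega
  rw [wk, ← cycle, hsplit, pow_add, pow_add, pow_one, Equiv.Perm.mul_apply, Equiv.Perm.mul_apply,
    show k + a + i = k + (a + i) from by omega, cycle_pow_apply_add k _ (a + i) _ (by omega)
      (by omega), cycle_apply, if_neg (by omega), if_pos (by omega),
    cycle_pow_apply_add k _ 1 _ le_rfl (by omega)]
  omega

theorem Bsum_of_lt (b : ℕ → ℕ) {i j : ℕ} (h : j < i) : Bsum b i j = 0 := by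
  rw [Bsum, Finset.Icc_eq_empty (by omega), Finset.sum_empty]

theorem Bsum_one_succ (b : ℕ → ℕ) (q : ℕ) : Bsum b 1 (q + 1) = Bsum b 1 q + b (q + 1) :=
  Finset.sum_Icc_succ_top (by omega) b

theorem add_Bsum_succ_le (b : ℕ → ℕ) {r t p : ℕ} (hrt : r ≤ t) (htp : t ≤ p) :
    b t + Bsum b (t + 1) p ≤ Bsum b r p := by
  have hIcc : Finset.Icc t p = insert t (Finset.Icc (t + 1) p) := by
    ext x; simp only [Finset.mem_Icc, Finset.mem_insert]; omega
  calc b t + Bsum b (t + 1) p = Bsum b t p := by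
        simp only [Bsum]; rw [hIcc, Finset.sum_insert (by simp)]
    _ ≤ Bsum b r p := Finset.sum_le_sum_of_subset (Finset.Icc_subset_Icc_left hrt)

/-- The factor `w^{⟨b_1^x⟩}_{b_{x+1}, b_{x+2}^p}` of `wcomp p b` (the one with `t = x + 1`). -/
def wFactor (p : ℕ) (b : ℕ → ℕ) (x : ℕ) : Equiv.Perm ℕ :=
  wk (Bsum b 1 x) (b (x + 1)) (Bsum b (x + 2) p)

def wcompFrom (p : ℕ) (b : ℕ → ℕ) (q : ℕ) : Equiv.Perm ℕ :=
  ((List.range' q (p - 1 - q)).map (wFactor p b)).prod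

theorem wcomp_eq_wcompFrom_zero (p : ℕ) (b : ℕ → ℕ) : wcomp p b = wcompFrom p b 0 := by
  rw [wcomp, wcompFrom, List.range_eq_range', Nat.sub_zero]
  rfl

theorem wcompFrom_of_le {p : ℕ} (b : ℕ → ℕ) {q : ℕ} (hq : p - 1 ≤ q) : wcompFrom p b q = 1 := by
  rw [wcompFrom, Nat.sub_eq_zero_of_le hq, List.range'_zero, List.map_nil, List.prod_nil]

theorem wcompFrom_of_lt {p : ℕ} (b : ℕ → ℕ) {q : ℕ} (hq : q < p - 1) :
    wcompFrom p b q = wFactor p b q * wcompFrom p b (q + 1) := by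
  rw [wcompFrom, wcompFrom, show p - 1 - q = p - 1 - (q + 1) + 1 from by omega, List.range'_succ,
    List.map_cons, List.prod_cons]

theorem wcompFrom_apply_of_le {p : ℕ} (b : ℕ → ℕ) {q x : ℕ} (hx : x ≤ Bsum b 1 q) :
    wcompFrom p b q x = x := by
  refine (MulAction.mem_stabilizer_iff (G := Equiv.Perm ℕ)).mp
    ((MulAction.stabilizer _ x).list_prod_mem fun f hf => ?_)
  obtain ⟨y, hy, rfl⟩ := List.mem_map.mp hf
  have hqy : Bsum b 1 q ≤ Bsum b 1 y :=
    Finset.sum_le_sum_of_subset (Finset.Icc_subset_Icc_right (List.mem_range'_1.mp hy).1)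
  exact wk_apply_of_le _ _ _ x (hx.trans hqy)

theorem wcompFrom_apply {p : ℕ} (b : ℕ → ℕ) {q t : ℕ} (hqt : q < t) (htp : t ≤ p) {i : ℕ}
    (hi : 1 ≤ i) (hib : i ≤ b t) :
    wcompFrom p b q (Bsum b 1 (t - 1) + i) = Bsum b 1 q + Bsum b (t + 1) p + i := by
  obtain ⟨d, hd⟩ : ∃ d, p - 1 - q = d := ⟨_, rfl⟩
  induction d generalizing q with
  | zero =>
    rw [wcompFrom_of_le b (by omega), Equiv.Perm.one_apply, show t - 1 = q from by omega,
      Bsum_of_lt b (show p < t + 1 by omega), Nat.add_zero]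
  | succ d ih =>
    rw [wcompFrom_of_lt b (by omega), Equiv.Perm.mul_apply, wFactor]
    rcases (Nat.succ_le_of_lt hqt).eq_or_lt with hqt' | hqt'
    · obtain rfl : t = q + 1 := hqt'.symm
      rw [Nat.add_sub_cancel, wcompFrom_apply_of_le b (by rw [Bsum_one_succ]; omega),
        wk_apply_add_left _ _ _ i hi hib]
    · have hle : Bsum b (t + 1) p + i ≤ Bsum b (q + 2) p := by
        have := add_Bsum_succ_le b (show q + 2 ≤ t by omega) htp
        omega
      rw [ih hqt' (by omega), Bsum_one_succ, add_assoc _ (Bsum b (t + 1) p),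
        wk_apply_add_right _ _ _ _ (by omega) hle, add_assoc]

end SymStmt

open SymStmt in
theorem stmt_7_general (p : ℕ) (b : ℕ → ℕ) :
    ∀ t : ℕ, 1 ≤ t → t ≤ p → ∀ i : ℕ, 1 ≤ i → i ≤ b t →
      wcomp p b (Bsum b 1 (t - 1) + i) = Bsum b (t + 1) p + i := by
  intro t ht htp i hi hib
  rw [wcomp_eq_wcompFrom_zero, wcompFrom_apply b ht htp hi hib, Bsum_of_lt b zero_lt_one,
    Nat.zero_add]

open SymStmt in
/-- Let `b = (b_1, ..., b_p)` be a composition of `n` into `p` non-negative parts.  Then the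
permutation `w_b` sends `b_1^{t-1} + i` to `b_{t+1}^p + i` for all `1 <= t <= p` and
`1 <= i <= b_t` (where `b_1^0 = 0` and `b_{p+1}^p = 0`). -/
theorem stmt_7 (n p : ℕ) (hn : 1 ≤ n) (hp : 2 ≤ p) (b : ℕ → ℕ)
    (hb : Bsum b 1 p = n) :
    ∀ t : ℕ, 1 ≤ t → t ≤ p → ∀ i : ℕ, 1 ≤ i → i ≤ b t →
      wcomp p b (Bsum b 1 (t - 1) + i) = Bsum b (t + 1) p + i :=
  stmt_7_general p b
end

section
/- In the Ariki–Koike algebra H, suppose 1 ≤ l < m ≤ n and 1 ≤ t ≤ p. Then T_i L^(t)_{l,m} = L^(t)_{l,m} T_i and L_j L^(t)_{l,m} = L^(t)_{l,m} L_j, for all i, j with 1 ≤ i < n, 1 ≤ j ≤ n, i ≠ l−1 and i ≠ m. -/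
noncomputable section

namespace AK

/-- The generator `T_i` inside the free algebra on `n` generators
(defined as `0` for the never-used out-of-range indices). -/
def gen (R : Type*) [CommRing R] (n : ℕ) (i : ℕ) : FreeAlgebra R (Fin n) :=
  if h : i < n then FreeAlgebra.ι R (⟨i, h⟩ : Fin n) else 0

/-- The defining relations of the Ariki–Koike algebra `H_{r,n}` with `r = p * d` and
cyclotomic parameters `(ε Q_1, …, ε Q_d, ε² Q_1, …, ε^p Q_d)`:
`∏_{t=1}^{p} ∏_{i=1}^{d} (T_0 - ε^t Q_i) = 0`; `(T_i - q)(T_i + 1) = 0` for `1 ≤ i ≤ n-1`;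
`T_0T_1T_0T_1 = T_1T_0T_1T_0`; `T_{i+1}T_iT_{i+1} = T_iT_{i+1}T_i` for `1 ≤ i ≤ n-2`; and
`T_iT_j = T_jT_i` for `0 ≤ i < j-1 ≤ n-2`. -/
inductive Rel (R : Type*) [CommRing R] (n p d : ℕ) (ε q : R) (Q : Fin d → R) :
    FreeAlgebra R (Fin n) → FreeAlgebra R (Fin n) → Prop
  | cyclotomic :
      Rel R n p d ε q Q
        (Polynomial.aeval (gen R n 0)
          (∏ t ∈ Finset.Icc 1 p, ∏ i : Fin d, (Polynomial.X - Polynomial.C (ε ^ t * Q i)))) 0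
  | quadratic (i : ℕ) (h1 : 1 ≤ i) (h2 : i ≤ n - 1) :
      Rel R n p d ε q Q
        ((gen R n i - algebraMap R (FreeAlgebra R (Fin n)) q) * (gen R n i + 1)) 0
  | braid0 :
      Rel R n p d ε q Q
        (gen R n 0 * gen R n 1 * gen R n 0 * gen R n 1)
        (gen R n 1 * gen R n 0 * gen R n 1 * gen R n 0)
  | braid (i : ℕ) (h1 : 1 ≤ i) (h2 : i ≤ n - 2) :
      Rel R n p d ε q Q
        (gen R n (i + 1) * gen R n i * gen R n (i + 1))
        (gen R n i * gen R n (i + 1) * gen R n i)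
  | comm (i j : ℕ) (h1 : i < j - 1) (h2 : j - 1 ≤ n - 2) :
      Rel R n p d ε q Q (gen R n i * gen R n j) (gen R n j * gen R n i)

/-- The Ariki–Koike algebra `H_{r,n}`, `r = p * d`: the quotient of the free `R`-algebra on the
`n` generators `T_0, …, T_{n-1}` by the two-sided ideal generated by the defining relations. -/
abbrev H (R : Type*) [CommRing R] (n p d : ℕ) (ε q : R) (Q : Fin d → R) :=
  RingQuot (Rel R n p d ε q Q)

/-- The images `T_i` of the generators in the Ariki–Koike algebra. -/
def T (R : Type*) [CommRing R] (n p d : ℕ) (ε q : R) (Q : Fin d → R) (i : ℕ) :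
    H R n p d ε q Q :=
  RingQuot.mkAlgHom R (Rel R n p d ε q Q) (gen R n i)

/-- The Jucys–Murphy elements: `L_1 = T_0` and `L_{k+1} = q⁻¹ T_k L_k T_k` for `1 ≤ k < n`. -/
def L (R : Type*) [CommRing R] (n p d : ℕ) (ε q : R) (Q : Fin d → R) : ℕ → H R n p d ε q Q
  | 0 => 1
  | 1 => T R n p d ε q Q 0
  | (k + 2) =>
      algebraMap R (H R n p d ε q Q) (Ring.inverse q) * T R n p d ε q Q (k + 1) *
        L R n p d ε q Q (k + 1) * T R n p d ε q Q (k + 1)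

/-- `ε ^ s` for an integer exponent `s`, read modulo `p`. -/
def epow (R : Type*) [CommRing R] (p : ℕ) (ε : R) (s : ℤ) : R := ε ^ (s % (p : ℤ)).toNat

/-- `L^{(s)}_k = ∏_{i=1}^{d} (L_k - ε^s Q_i)` (depending only on `s` mod `p`). -/
def Ls (R : Type*) [CommRing R] (n p d : ℕ) (ε q : R) (Q : Fin d → R) (s : ℤ) (k : ℕ) :
    H R n p d ε q Q :=
  Polynomial.aeval (L R n p d ε q Q k)
    (∏ i : Fin d, (Polynomial.X - Polynomial.C (epow R p ε s * Q i)))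

/-- `∏_{l ≤ k ≤ m} ∏_{lo ≤ s ≤ hi} L^{(s)}_k`, for a consecutive range `lo..hi` of
superscripts (read modulo `p`). -/
def LLg (R : Type*) [CommRing R] (n p d : ℕ) (ε q : R) (Q : Fin d → R)
    (lo hi : ℤ) (l m : ℕ) : H R n p d ε q Q :=
  ((List.range (m + 1 - l)).map fun (x : ℕ) =>
    ((List.range (hi + 1 - lo).toNat).map fun (y : ℕ) =>
      Ls R n p d ε q Q (lo + (y : ℤ)) (l + x)).prod).prod

/-- `L^{(t)}_{l,m} = ∏_{l ≤ k ≤ m} L^{(t)}_k`. -/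
def Lt (R : Type*) [CommRing R] (n p d : ℕ) (ε q : R) (Q : Fin d → R)
    (t : ℤ) (l m : ℕ) : H R n p d ε q Q :=
  LLg R n p d ε q Q t t l m

/-- `L^{(i,j)}_{l,m} = ∏_{l ≤ k ≤ m} ∏_{s ∈ I_{ij}} L^{(s)}_k` where `I_{ij} = {i, …, j}` if
`i ≤ j` and `I_{ij} = {1, …, j} ∪ {i, …, p}` if `i > j` (as sets of exponents modulo `p`,
`I_{ij}` is the consecutive range `i, i+1, …, j + p` when `i > j`). -/
def LL (R : Type*) [CommRing R] (n p d : ℕ) (ε q : R) (Q : Fin d → R)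
    (i j : ℕ) (l m : ℕ) : H R n p d ε q Q :=
  LLg R n p d ε q Q (i : ℤ) (if i ≤ j then (j : ℤ) else (j : ℤ) + (p : ℤ)) l m

/-- `T^{⟨k⟩}_{a,b} = (T_{a+b+k-1} T_{a+b+k-2} ⋯ T_{k+1})^b`, and `T_{a,b} = T^{⟨0⟩}_{a,b}`. -/
def Tw (R : Type*) [CommRing R] (n p d : ℕ) (ε q : R) (Q : Fin d → R)
    (k a b : ℕ) : H R n p d ε q Q :=
  (((List.range (a + b - 1)).map fun (j : ℕ) => T R n p d ε q Q (a + b + k - 1 - j)).prod) ^ b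

/-- Partial sums `b_i^j = b_i + b_{i+1} + ⋯ + b_j` (zero when `i > j`). -/
def Bsum (b : ℕ → ℕ) (i j : ℕ) : ℕ := ∑ t ∈ Finset.Icc i j, b t

/-- The element `v_b^{(t)}`; `v_b = v_b^{(0)}` is
`L^{(1,p-1)}_{1,b_p} T_{b_p,b_1^{p-1}} L^{(1,p-2)}_{1,b_{p-1}} T_{b_{p-1},b_1^{p-2}} ⋯
L^{(1,1)}_{1,b_2} T_{b_2,b_1^1} ⋅ L^{(2)}_{1,b_1^1} L^{(3)}_{1,b_1^2} ⋯ L^{(p)}_{1,b_1^{p-1}}`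
and `v_b^{(t)}` is obtained by shifting every superscript `s` to `s + t`. -/
def v (R : Type*) [CommRing R] (n p d : ℕ) (ε q : R) (Q : Fin d → R)
    (b : ℕ → ℕ) (t : ℤ) : H R n p d ε q Q :=
  (((List.range (p - 1)).map fun (x : ℕ) =>
      LLg R n p d ε q Q (1 + t) (((p - 1 - x : ℕ) : ℤ) + t) 1 (b (p - x)) *
        Tw R n p d ε q Q 0 (b (p - x)) (Bsum b 1 (p - 1 - x))).prod) *
  (((List.range (p - 1)).map fun (x : ℕ) =>
      Lt R n p d ε q Q ((x : ℤ) + 2 + t) 1 (Bsum b 1 (x + 1))).prod)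

/-- `Y_t = L^{(t+1, t+p-1)}_{1, b_t} T_{b_t, n - b_t}` (superscripts read modulo `p`). -/
def Y (R : Type*) [CommRing R] (n p d : ℕ) (ε q : R) (Q : Fin d → R)
    (b : ℕ → ℕ) (t : ℕ) : H R n p d ε q Q :=
  LLg R n p d ε q Q ((t : ℤ) + 1) ((t : ℤ) + (p : ℤ) - 1) 1 (b t) *
    Tw R n p d ε q Q 0 (b t) (n - b t)

/-- `T_b = T^{⟨b_1^{p-2}⟩}_{b_{p-1}, b_p^p} ⋯ T^{⟨b_1^1⟩}_{b_2, b_3^p} T_{b_1, b_2^p}`. -/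
def Tcomp (R : Type*) [CommRing R] (n p d : ℕ) (ε q : R) (Q : Fin d → R)
    (b : ℕ → ℕ) : H R n p d ε q Q :=
  ((List.range (p - 1)).map fun (x : ℕ) =>
    Tw R n p d ε q Q (Bsum b 1 (p - 2 - x)) (b (p - 1 - x)) (Bsum b (p - x) p)).prod

end AK

/-!
The Jucys–Murphy elements commute pairwise, and `T_i` commutes with `L_k` for `k ∉ {i, i+1}`;
both follow by induction on `k` from the braid relations and `L_{k+1} = q⁻¹ T_k L_k T_k`.
For the remaining two factors, `T_i L_i T_i L_i = L_i T_i L_i T_i` shows that `T_i` commutes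
with `L_i L_{i+1}`, and the quadratic relation gives
`T_i L_{i+1} = L_i T_i + (q - 1) L_{i+1}` and `L_{i+1} T_i = T_i L_i + (q - 1) L_{i+1}`, so `T_i`
commutes with `L_i + L_{i+1}`. Hence `T_i` commutes with the symmetric expression
`f(L_i) f(L_{i+1})` for every split polynomial `f`. Since `i ≠ l - 1, m`, the indices `i` and
`i + 1` lie either both or neither in `[l, m]`, so `T_i` commutes with every block of
`L^{(t)}_{l,m} = ∏_{k=l}^{m} L^{(t)}_k`.
-/

section Braids

variable {M : Type*} [Monoid M] {a b x : M}

theorem commute_sandwich_of_braid (hbr : a * b * a = b * a * b) (hax : Commute a x)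
    (hx : Commute x (b * x * b)) : Commute (b * x * b) (a * (b * x * b) * a) := by
  have hax := hax.eq
  have hx : b * x * b * x = x * b * x * b := by simpa only [mul_assoc] using hx.eq.symm
  refine Eq.symm ?_
  calc a * (b * x * b) * a * (b * x * b)
      = a * b * x * (b * a * b) * x * b := by simp only [mul_assoc]
    _ = a * b * (x * a) * b * a * x * b := by rw [← hbr]; simp only [mul_assoc]
    _ = a * b * a * x * b * (a * x) * b := by rw [← hax]; simp only [mul_assoc]
    _ = (a * b * a) * x * b * x * a * b := by rw [hax]; simp only [mul_assoc]
    _ = b * a * (b * x * b * x) * a * b := by rw [hbr]; simp only [mul_assoc]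
    _ = b * (a * x) * b * x * b * a * b := by rw [hx]; simp only [mul_assoc]
    _ = b * x * a * b * x * (b * a * b) := by rw [hax]; simp only [mul_assoc]
    _ = b * x * a * b * (x * a) * b * a := by rw [← hbr]; simp only [mul_assoc]
    _ = b * x * (a * b * a) * x * b * a := by rw [← hax]; simp only [mul_assoc]
    _ = b * x * b * (a * (b * x * b) * a) := by rw [hbr]; simp only [mul_assoc]

theorem commute_braid_sandwich (hbr : a * b * a = b * a * b) (hbx : Commute b x) :
    Commute a (b * (a * x * a) * b) := by
  calc a * (b * (a * x * a) * b)
      = (a * b * a) * (x * a * b) := by simp only [mul_assoc]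
    _ = b * a * (b * x) * (a * b) := by rw [hbr]; simp only [mul_assoc]
    _ = b * a * x * (b * a * b) := by rw [hbx.eq]; simp only [mul_assoc]
    _ = b * (a * x * a) * b * a := by rw [← hbr]; simp only [mul_assoc]

end Braids

section CommutePolynomial

open Polynomial

variable {R A : Type*} [CommRing R] [Ring A] [Algebra R A] {x y z : A}

theorem Commute.aeval_right (h : Commute z x) (f : R[X]) : Commute z (aeval x f) := by
  simpa only [aeval_eq_smeval] using (smeval_commute_left R f h.symm).symm

theorem commute_sub_algebraMap_mul_sub_algebraMap (hmul : Commute z (x * y))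
    (hadd : Commute z (x + y)) (c : R) :
    Commute z ((x - algebraMap R A c) * (y - algebraMap R A c)) := by
  have hexp : (x - algebraMap R A c) * (y - algebraMap R A c)
      = x * y - c • (x + y) + (c * c) • 1 := by
    simp only [Algebra.algebraMap_eq_smul_one, sub_mul, mul_sub, smul_mul_assoc, mul_smul_comm,
      one_mul, mul_one]
    module
  rw [hexp]
  exact (hmul.sub_right (hadd.smul_right c)).add_right ((Commute.one_right z).smul_right _)

theorem commute_aeval_prod_X_sub_C_mul {ι : Type*} (hxy : Commute x y)
    (hmul : Commute z (x * y)) (hadd : Commute z (x + y)) (s : Finset ι) (c : ι → R) :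
    Commute z (aeval x (∏ a ∈ s, (X - C (c a))) * aeval y (∏ a ∈ s, (X - C (c a)))) := by
  classical
  induction s using Finset.induction_on with
  | empty => simp
  | insert a s ha ih =>
    set f := ∏ a ∈ s, (X - C (c a))
    have hfx : Commute (aeval x f) (y - algebraMap R A (c a)) :=
      ((hxy.symm.sub_left (Algebra.commutes (c a) x)).aeval_right f).symm
    rw [Finset.prod_insert ha, map_mul, map_mul, map_sub, map_sub, aeval_X, aeval_C, aeval_X,
      aeval_C, mul_assoc, ← mul_assoc (aeval x f), hfx.eq, mul_assoc, ← mul_assoc]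
    exact (commute_sub_algebraMap_mul_sub_algebraMap hmul hadd (c a)).mul_right ih

end CommutePolynomial

namespace AK

open Polynomial

variable {R : Type*} [CommRing R] {n p d : ℕ} {ε q : R} {Q : Fin d → R}

local notation "𝐓" => T R n p d ε q Q
local notation "𝐋" => L R n p d ε q Q
local notation "𝐋ˢ" => Ls R n p d ε q Q

theorem T_eq_zero_of_le {i : ℕ} (h : n ≤ i) : 𝐓 i = 0 := by
  simp [T, gen, not_lt.mpr h]

theorem commute_T_T {i j : ℕ} (hij : i + 2 ≤ j) : Commute (𝐓 i) (𝐓 j) := by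
  by_cases hj : j < n
  · show 𝐓 i * 𝐓 j = 𝐓 j * 𝐓 i
    simpa only [T, map_mul] using RingQuot.mkAlgHom_rel R
      (Rel.comm (p := p) (d := d) (ε := ε) (q := q) (Q := Q) i j (by omega) (by omega))
  · rw [T_eq_zero_of_le (not_lt.mp hj)]
    exact Commute.zero_right _

theorem T_braid {i : ℕ} (hi : 1 ≤ i) : 𝐓 (i + 1) * 𝐓 i * 𝐓 (i + 1) = 𝐓 i * 𝐓 (i + 1) * 𝐓 i := by
  by_cases hi' : i + 1 < n
  · simpa only [T, map_mul] using RingQuot.mkAlgHom_rel R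
      (Rel.braid (p := p) (d := d) (ε := ε) (q := q) (Q := Q) i hi (by omega))
  · simp [T_eq_zero_of_le (not_lt.mp hi')]

theorem T_braid_zero : 𝐓 0 * 𝐓 1 * 𝐓 0 * 𝐓 1 = 𝐓 1 * 𝐓 0 * 𝐓 1 * 𝐓 0 := by
  simpa only [T, map_mul] using RingQuot.mkAlgHom_rel R
    (Rel.braid0 (n := n) (p := p) (d := d) (ε := ε) (q := q) (Q := Q))

theorem T_mul_self {i : ℕ} (hi : 1 ≤ i) (hin : i < n) :
    𝐓 i * 𝐓 i = (q - 1) • 𝐓 i + algebraMap R _ q := by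
  have h : (𝐓 i - algebraMap R _ q) * (𝐓 i + 1) = 0 := by
    simpa only [T, map_mul, map_sub, map_add, map_one, map_zero, AlgHom.commutes] using
      RingQuot.mkAlgHom_rel R
        (Rel.quadratic (n := n) (p := p) (d := d) (ε := ε) (q := q) (Q := Q) i hi (by omega))
  rw [Algebra.smul_def, map_sub, map_one, ← sub_eq_zero, ← h]
  simp only [sub_mul, mul_add, one_mul, mul_one]
  abel

theorem L_succ {k : ℕ} (hk : 1 ≤ k) : 𝐋 (k + 1) = Ring.inverse q • (𝐓 k * 𝐋 k * 𝐓 k) := by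
  obtain ⟨k, rfl⟩ := Nat.exists_eq_add_of_le' hk
  rw [Algebra.smul_def]
  simp only [L, mul_assoc]

theorem commute_T_L_of_lt : ∀ {k i : ℕ}, k < i → Commute (𝐓 i) (𝐋 k)
  | 0, _, _ => Commute.one_right _
  | 1, _, h => (commute_T_T h).symm
  | k + 2, i, h => by
    have hT : Commute (𝐓 (k + 1)) (𝐓 i) := commute_T_T (by omega)
    rw [L_succ (by omega)]
    exact ((hT.symm.mul_right (commute_T_L_of_lt (by omega))).mul_right hT.symm).smul_right _

theorem commute_L_T_L_T : ∀ {k : ℕ}, 1 ≤ k → Commute (𝐋 k) (𝐓 k * 𝐋 k * 𝐓 k)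
  | 1, _ => by
    show 𝐓 0 * (𝐓 1 * 𝐓 0 * 𝐓 1) = 𝐓 1 * 𝐓 0 * 𝐓 1 * 𝐓 0
    rw [← mul_assoc, ← mul_assoc, T_braid_zero]
  | k + 2, _ => by
    rw [L_succ (by omega), mul_smul_comm, smul_mul_assoc]
    exact ((commute_sandwich_of_braid (T_braid (by omega)) (commute_T_L_of_lt (by omega))
      (commute_L_T_L_T (by omega))).smul_left _).smul_right _

theorem commute_L_L_succ (k : ℕ) : Commute (𝐋 k) (𝐋 (k + 1)) := by
  rcases Nat.eq_zero_or_pos k with rfl | hk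
  · exact Commute.one_left _
  · rw [L_succ hk]
    exact (commute_L_T_L_T hk).smul_right _

theorem commute_T_L_of_add_two_le {i k : ℕ} (hi : 1 ≤ i) (hik : i + 2 ≤ k) :
    Commute (𝐓 i) (𝐋 k) := by
  induction k, hik using Nat.le_induction with
  | base =>
    rw [L_succ (by omega), L_succ hi, mul_smul_comm, smul_mul_assoc]
    exact ((commute_braid_sandwich (T_braid hi).symm
      (commute_T_L_of_lt (by omega))).smul_right _).smul_right _
  | succ k hk ih =>
    have hT : Commute (𝐓 i) (𝐓 k) := commute_T_T hk
    rw [L_succ (by omega)]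
    exact ((hT.mul_right ih).mul_right hT).smul_right _

theorem commute_L_L_of_lt {j k : ℕ} (hjk : j < k) : Commute (𝐋 j) (𝐋 k) := by
  induction k, hjk using Nat.le_induction with
  | base => exact commute_L_L_succ j
  | succ k hk ih =>
    have hT : Commute (𝐋 j) (𝐓 k) := (commute_T_L_of_lt hk).symm
    rw [L_succ (by omega)]
    exact ((hT.mul_right ih).mul_right hT).smul_right _

theorem commute_L_L (j k : ℕ) : Commute (𝐋 j) (𝐋 k) := by
  rcases lt_trichotomy j k with h | rfl | h
  · exact commute_L_L_of_lt h
  · exact Commute.refl _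
  · exact (commute_L_L_of_lt h).symm

theorem T_mul_L_succ (hq : IsUnit q) {i : ℕ} (hi : 1 ≤ i) (hin : i < n) :
    𝐓 i * 𝐋 (i + 1) = 𝐋 i * 𝐓 i + (q - 1) • 𝐋 (i + 1) := by
  rw [L_succ hi, mul_smul_comm, ← mul_assoc, ← mul_assoc, T_mul_self hi hin]
  simp only [Algebra.algebraMap_eq_smul_one, add_mul, smul_mul_assoc, one_mul, smul_add,
    smul_smul, Ring.inverse_mul_cancel q hq, one_smul, mul_comm (Ring.inverse q)]
  abel

theorem L_succ_mul_T (hq : IsUnit q) {i : ℕ} (hi : 1 ≤ i) (hin : i < n) :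
    𝐋 (i + 1) * 𝐓 i = 𝐓 i * 𝐋 i + (q - 1) • 𝐋 (i + 1) := by
  rw [L_succ hi, smul_mul_assoc, mul_assoc, T_mul_self hi hin]
  simp only [Algebra.algebraMap_eq_smul_one, mul_add, mul_smul_comm, mul_one, smul_add,
    smul_smul, Ring.inverse_mul_cancel q hq, one_smul, mul_comm (Ring.inverse q)]
  abel

theorem commute_T_L_add_L_succ (hq : IsUnit q) {i : ℕ} (hi : 1 ≤ i) (hin : i < n) :
    Commute (𝐓 i) (𝐋 i + 𝐋 (i + 1)) := by
  rw [Commute, SemiconjBy, mul_add, add_mul, T_mul_L_succ hq hi hin, L_succ_mul_T hq hi hin]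
  abel

theorem commute_T_L_mul_L_succ {i : ℕ} (hi : 1 ≤ i) : Commute (𝐓 i) (𝐋 i * 𝐋 (i + 1)) := by
  have h : 𝐋 i * 𝐓 i * 𝐋 i * 𝐓 i = 𝐓 i * 𝐋 i * 𝐓 i * 𝐋 i := by
    simpa only [mul_assoc] using (commute_L_T_L_T hi).eq
  rw [L_succ hi, mul_smul_comm]
  refine Commute.smul_right ?_ _
  calc 𝐓 i * (𝐋 i * (𝐓 i * 𝐋 i * 𝐓 i))
      = 𝐓 i * 𝐋 i * 𝐓 i * 𝐋 i * 𝐓 i := by simp only [mul_assoc]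
    _ = 𝐋 i * (𝐓 i * 𝐋 i * 𝐓 i) * 𝐓 i := by rw [← h]; simp only [mul_assoc]

theorem commute_T_Ls_mul_Ls_succ (hq : IsUnit q) {i : ℕ} (hi : 1 ≤ i) (hin : i < n) (s : ℤ) :
    Commute (𝐓 i) (𝐋ˢ s i * 𝐋ˢ s (i + 1)) :=
  commute_aeval_prod_X_sub_C_mul (commute_L_L_succ i) (commute_T_L_mul_L_succ hi)
    (commute_T_L_add_L_succ hq hi hin) _ _

theorem Lt_eq_prod (t : ℤ) (l m : ℕ) :
    Lt R n p d ε q Q t l m = ((List.range' l (m + 1 - l)).map (𝐋ˢ t)).prod := by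
  simp [Lt, LLg, List.range'_eq_map_range, Function.comp_def]

theorem commute_L_Lt (j : ℕ) (t : ℤ) (l m : ℕ) : Commute (𝐋 j) (Lt R n p d ε q Q t l m) := by
  rw [Lt_eq_prod]
  refine Commute.list_prod_right _ _ ?_
  simp only [List.forall_mem_map]
  exact fun k _ => (commute_L_L j k).aeval_right _

theorem commute_T_Lt (hq : IsUnit q) {i l m : ℕ} (hi : 1 ≤ i) (hin : i < n) (hil : i ≠ l - 1)
    (him : i ≠ m) (t : ℤ) : Commute (𝐓 i) (Lt R n p d ε q Q t l m) := by
  have hfar : ∀ k, k < i ∨ i + 2 ≤ k → Commute (𝐓 i) (𝐋ˢ t k) := by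
    rintro k (hk | hk)
    · exact (commute_T_L_of_lt hk).aeval_right _
    · exact (commute_T_L_of_add_two_le hi hk).aeval_right _
  have hfar_prod : ∀ a b, (∀ k, a ≤ k → k < a + b → k < i ∨ i + 2 ≤ k) →
      Commute (𝐓 i) ((List.range' a b).map (𝐋ˢ t)).prod := by
    intro a b hab
    refine Commute.list_prod_right _ _ ?_
    simp only [List.forall_mem_map, List.mem_range'_1]
    exact fun k hk => hfar k (hab k hk.1 hk.2)
  rw [Lt_eq_prod]
  by_cases hmid : l ≤ i ∧ i < m
  · rw [show m + 1 - l = (i - l) + (2 + (m - i - 1)) by omega, ← List.range'_append_1,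
      ← List.range'_append_1, List.map_append, List.map_append, List.prod_append,
      List.prod_append, show l + (i - l) = i by omega]
    refine (hfar_prod _ _ (by omega)).mul_right ((?_ : Commute _ _).mul_right
      (hfar_prod _ _ (by omega)))
    have hpair : Commute (𝐓 i) (𝐋ˢ t i * 𝐋ˢ t (i + 1)) := commute_T_Ls_mul_Ls_succ hq hi hin t
    simpa [List.range'] using hpair
  · exact hfar_prod _ _ (by omega)

end AK

theorem stmt_9_general (R : Type*) [CommRing R] (n p d : ℕ) (ε q : R) (Q : Fin d → R) (hq : IsUnit q) :
    ∀ l m t : ℕ, 1 ≤ l → l < m → m ≤ n → 1 ≤ t → t ≤ p →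
      ∀ i j : ℕ, 1 ≤ i → i < n → 1 ≤ j → j ≤ n → i ≠ l - 1 → i ≠ m →
        AK.T R n p d ε q Q i * AK.Lt R n p d ε q Q (t : ℤ) l m =
            AK.Lt R n p d ε q Q (t : ℤ) l m * AK.T R n p d ε q Q i ∧
          AK.L R n p d ε q Q j * AK.Lt R n p d ε q Q (t : ℤ) l m =
            AK.Lt R n p d ε q Q (t : ℤ) l m * AK.L R n p d ε q Q j := by
  intro l m t _ _ _ _ _ i j hi hin _ _ hil him
  exact ⟨(AK.commute_T_Lt hq hi hin hil him t).eq, (AK.commute_L_Lt j t l m).eq⟩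

/-- In the Ariki-Koike algebra `H`, suppose `1 <= l < m <= n` and
`1 <= t <= p`.  Then `T_i L^(t)_(l,m) = L^(t)_(l,m) T_i` and `L_j L^(t)_(l,m) = L^(t)_(l,m) L_j`,
for all `i, j` with `1 <= i < n`, `1 <= j <= n`, `i ≠ l-1` and `i ≠ m`. -/
theorem stmt_9 (R : Type*) [CommRing R] (n p d : ℕ) (hn : 3 ≤ n) (hp : 2 ≤ p) (hd : 1 ≤ d)
    (ε q : R) (Q : Fin d → R) (hε : IsPrimitiveRoot ε p)
    (hq : IsUnit q) (hQ : ∀ i, IsUnit (Q i)) :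
    ∀ l m t : ℕ, 1 ≤ l → l < m → m ≤ n → 1 ≤ t → t ≤ p →
      ∀ i j : ℕ, 1 ≤ i → i < n → 1 ≤ j → j ≤ n → i ≠ l - 1 → i ≠ m →
        AK.T R n p d ε q Q i * AK.Lt R n p d ε q Q (t : ℤ) l m =
            AK.Lt R n p d ε q Q (t : ℤ) l m * AK.T R n p d ε q Q i ∧
          AK.L R n p d ε q Q j * AK.Lt R n p d ε q Q (t : ℤ) l m =
            AK.Lt R n p d ε q Q (t : ℤ) l m * AK.L R n p d ε q Q j :=
  stmt_9_general R n p d ε q Q hq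
end
end

section
/- There is a unique R-algebra automorphism σ of the Ariki–Koike algebra H satisfying σ(T_0) = εT_0 and σ(T_i) = T_i for 1 ≤ i ≤ n−1. Moreover σ^p is the identity automorphism of H, and σ(L_k) = εL_k for all 1 ≤ k ≤ n. -/
noncomputable section

/-!
Since `ε ^ p = 1`, substituting `ε X` for `X` in `∏_{t,i} (X - ε^t Q_i)` only permutes the
factors (up to the scalar `ε ^ (p d)`), so `T_0 ↦ ε T_0`, `T_i ↦ T_i` respects the cyclotomic
relation; every other relation is homogeneous in `T_0`. This defines an endomorphism `σ` with
`σ ^ p = 1` on the generators, hence an automorphism. It is unique because the `T_i` generate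
`H`, and `σ (L_k) = ε L_k` by induction, `L_{k+1} = q⁻¹ T_k L_k T_k` being linear in `L_k`.
-/

open Polynomial

theorem Finset.prod_Icc_one_pred_eq_of_eq {M : Type*} [CommMonoid M] {p : ℕ} (g : ℕ → M)
    (h : g 0 = g p) : ∏ t ∈ Finset.Icc 1 p, g (t - 1) = ∏ t ∈ Finset.Icc 1 p, g t := by
  rcases p with _ | m
  · rfl
  have shift (f : ℕ → M) :
      ∏ t ∈ Finset.Icc 1 (m + 1), f t = ∏ t ∈ Finset.range (m + 1), f (t + 1) := by
    rw [Finset.range_eq_Ico, Finset.prod_Ico_add' f 0 (m + 1) 1]; rfl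
  simp only [shift, Nat.add_sub_cancel]
  rw [Finset.prod_range_succ', Finset.prod_range_succ, h]

theorem Polynomial.prod_X_sub_C_mul_comp_C_mul_X {R ι : Type*} [CommRing R] (s : Finset ι)
    (c : R) (a : ι → R) :
    (∏ j ∈ s, (X - C (c * a j))).comp (C c * X) =
      C c ^ s.card * ∏ j ∈ s, (X - C (a j)) := by
  rw [prod_comp, ← Finset.prod_const, ← Finset.prod_mul_distrib]
  refine Finset.prod_congr rfl fun j _ => ?_
  rw [sub_comp, X_comp, C_comp, C_mul]
  ring

theorem AlgHom.pow_apply_of_apply_eq_algebraMap_mul {R A : Type*} [CommSemiring R]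
    [Semiring A] [Algebra R A] {φ : A →ₐ[R] A} {x : A} {c : R}
    (h : φ x = algebraMap R A c * x) : ∀ k : ℕ, (φ ^ k) x = algebraMap R A (c ^ k) * x
  | 0 => by simp
  | k + 1 => by
    rw [pow_succ', AlgHom.mul_apply, pow_apply_of_apply_eq_algebraMap_mul h k, map_mul,
      AlgHom.commutes, h, ← mul_assoc, ← map_mul, ← pow_succ]

theorem AlgHom.pow_apply_of_apply_eq {R A : Type*} [CommSemiring R] [Semiring A]
    [Algebra R A] {φ : A →ₐ[R] A} {x : A} (h : φ x = x) (k : ℕ) : (φ ^ k) x = x := by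
  rw [AlgHom.coe_pow, Function.iterate_fixed h]

namespace AK

def cyclotomicPoly {R : Type*} [CommRing R] (p d : ℕ) (ε : R) (Q : Fin d → R) : R[X] :=
  ∏ t ∈ Finset.Icc 1 p, ∏ i : Fin d, (X - C (ε ^ t * Q i))

variable {R : Type*} [CommRing R] {n p d : ℕ} {ε q : R} {Q : Fin d → R}

theorem cyclotomicPoly_comp_C_mul_X (hε : ε ^ p = 1) :
    (cyclotomicPoly p d ε Q).comp (C ε * X) = C ε ^ (p * d) * cyclotomicPoly p d ε Q := by
  have shift : ∀ t ∈ Finset.Icc 1 p, (∏ i : Fin d, (X - C (ε ^ t * Q i))).comp (C ε * X) =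
      C ε ^ d * ∏ i : Fin d, (X - C (ε ^ (t - 1) * Q i)) := by
    intro t ht
    have ht : ε ^ t = ε * ε ^ (t - 1) := by
      rw [← pow_succ', Nat.sub_add_cancel (Finset.mem_Icc.1 ht).1]
    simp only [ht, mul_assoc, prod_X_sub_C_mul_comp_C_mul_X, Finset.card_univ, Fintype.card_fin]
  rw [cyclotomicPoly, prod_comp, Finset.prod_congr rfl shift, Finset.prod_mul_distrib,
    Finset.prod_const, Nat.card_Icc, Nat.add_sub_cancel, ← pow_mul, mul_comm d p,
    Finset.prod_Icc_one_pred_eq_of_eq (fun t => ∏ i : Fin d, (X - C (ε ^ t * Q i)))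
      (by simp [hε])]

theorem aeval_algebraMap_mul_eq_zero {A : Type*} [Ring A] [Algebra R A] (hε : ε ^ p = 1)
    {x : A} (hx : aeval x (cyclotomicPoly p d ε Q) = 0) :
    aeval (algebraMap R A ε * x) (cyclotomicPoly p d ε Q) = 0 := by
  rw [← aeval_X (R := R) x, ← aeval_C (R := R) x ε, ← map_mul, ← aeval_comp,
    cyclotomicPoly_comp_C_mul_X hε, map_mul, hx, mul_zero]

theorem T_eq_zero_of_le_s15 {i : ℕ} (h : n ≤ i) : T R n p d ε q Q i = 0 := by
  simp [T, gen, not_lt.2 h]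

theorem aeval_T_zero : aeval (T R n p d ε q Q 0) (cyclotomicPoly p d ε Q) = 0 := by
  rw [T, aeval_algHom_apply, ← map_zero (RingQuot.mkAlgHom R (Rel R n p d ε q Q))]
  exact RingQuot.mkAlgHom_rel R Rel.cyclotomic

theorem algHom_ext {B : Type*} [Semiring B] [Algebra R B] {f g : H R n p d ε q Q →ₐ[R] B}
    (h : ∀ i < n, f (T R n p d ε q Q i) = g (T R n p d ε q Q i)) : f = g :=
  RingQuot.ringQuot_ext' _ _ _ <| FreeAlgebra.hom_ext <| funext fun i => by
    simpa [T, gen] using h i i.isLt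

variable (R n p d ε q Q) in
def sigmaGen (i : ℕ) : H R n p d ε q Q :=
  if i = 0 then algebraMap R (H R n p d ε q Q) ε * T R n p d ε q Q 0 else T R n p d ε q Q i

theorem sigmaGen_zero :
    sigmaGen R n p d ε q Q 0 = algebraMap R (H R n p d ε q Q) ε * T R n p d ε q Q 0 := rfl

theorem sigmaGen_of_ne_zero {i : ℕ} (hi : i ≠ 0) :
    sigmaGen R n p d ε q Q i = T R n p d ε q Q i := if_neg hi

theorem lift_sigmaGen_gen (i : ℕ) :
    FreeAlgebra.lift R (fun j : Fin n => sigmaGen R n p d ε q Q j) (gen R n i) =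
      sigmaGen R n p d ε q Q i := by
  by_cases hi : i < n
  · rw [gen, dif_pos hi, FreeAlgebra.lift_ι_apply]
  · have hT := T_eq_zero_of_le_s15 (p := p) (d := d) (ε := ε) (q := q) (Q := Q) (not_lt.1 hi)
    rw [gen, dif_neg hi, map_zero, sigmaGen]
    split_ifs with h0
    · rw [h0] at hT; rw [hT, mul_zero]
    · exact hT.symm

theorem sigmaGen_rel (hε : ε ^ p = 1) ⦃x y : FreeAlgebra R (Fin n)⦄
    (h : Rel R n p d ε q Q x y) :
    FreeAlgebra.lift R (fun j : Fin n => sigmaGen R n p d ε q Q j) x =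
      FreeAlgebra.lift R (fun j : Fin n => sigmaGen R n p d ε q Q j) y := by
  have hr := RingQuot.mkAlgHom_rel R h
  induction h with
  | cyclotomic =>
    rw [map_zero, ← aeval_algHom_apply, lift_sigmaGen_gen, sigmaGen_zero]
    exact aeval_algebraMap_mul_eq_zero hε aeval_T_zero
  | quadratic i h1 h2 =>
    simp only [map_mul, map_sub, map_add, map_one, map_zero, AlgHom.commutes, ← T.eq_1] at hr
    simp only [map_mul, map_sub, map_add, map_one, map_zero, AlgHom.commutes, lift_sigmaGen_gen,
      sigmaGen_of_ne_zero (show i ≠ 0 by omega)]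
    exact hr
  | braid0 =>
    simp only [map_mul, ← T.eq_1] at hr
    simp only [map_mul, lift_sigmaGen_gen, sigmaGen_zero, sigmaGen_of_ne_zero one_ne_zero,
      ← Algebra.smul_def, smul_mul_assoc, mul_smul_comm, hr]
  | braid i h1 h2 =>
    simp only [map_mul, ← T.eq_1] at hr
    simp only [map_mul, lift_sigmaGen_gen, sigmaGen_of_ne_zero (show i ≠ 0 by omega),
      sigmaGen_of_ne_zero (show i + 1 ≠ 0 by omega), hr]
  | comm i j h1 h2 =>
    simp only [map_mul, ← T.eq_1] at hr
    have hj : j ≠ 0 := by omega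
    rcases eq_or_ne i 0 with rfl | hi
    · simp only [map_mul, lift_sigmaGen_gen, sigmaGen_zero, sigmaGen_of_ne_zero hj,
        ← Algebra.smul_def, smul_mul_assoc, mul_smul_comm, hr]
    · simp only [map_mul, lift_sigmaGen_gen, sigmaGen_of_ne_zero hi, sigmaGen_of_ne_zero hj, hr]

def sigma (hε : ε ^ p = 1) : H R n p d ε q Q →ₐ[R] H R n p d ε q Q :=
  RingQuot.liftAlgHom R ⟨FreeAlgebra.lift R fun j : Fin n => sigmaGen R n p d ε q Q j,
    sigmaGen_rel hε⟩

theorem sigma_T (hε : ε ^ p = 1) (i : ℕ) :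
    sigma (q := q) (Q := Q) hε (T R n p d ε q Q i) = sigmaGen R n p d ε q Q i := by
  rw [sigma, T, RingQuot.liftAlgHom_mkAlgHom_apply, lift_sigmaGen_gen]

theorem sigma_pow (hε : ε ^ p = 1) : sigma (n := n) (q := q) (Q := Q) hε ^ p = 1 :=
  algHom_ext fun i _ => by
    rcases eq_or_ne i 0 with rfl | hi
    · rw [AlgHom.pow_apply_of_apply_eq_algebraMap_mul (sigma_T hε 0) p, hε, map_one, one_mul,
        AlgHom.one_apply]
    · rw [AlgHom.pow_apply_of_apply_eq ((sigma_T hε i).trans (sigmaGen_of_ne_zero hi)),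
        AlgHom.one_apply]

def sigmaEquiv (hp : 1 ≤ p) (hε : ε ^ p = 1) : H R n p d ε q Q ≃ₐ[R] H R n p d ε q Q :=
  AlgEquiv.ofAlgHom (sigma hε) (sigma hε ^ (p - 1))
    (show sigma hε * _ = 1 by rw [← pow_succ', Nat.sub_add_cancel hp, sigma_pow])
    (show _ * sigma hε = 1 by rw [← pow_succ, Nat.sub_add_cancel hp, sigma_pow])

theorem sigmaEquiv_pow (hp : 1 ≤ p) (hε : ε ^ p = 1) :
    sigmaEquiv (n := n) (q := q) (Q := Q) hp hε ^ p = 1 := by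
  ext x
  have h := congr($(sigma_pow (n := n) (q := q) (Q := Q) hε) x)
  rw [AlgHom.coe_pow] at h
  rwa [AlgEquiv.coe_pow]

variable (ε) in
def IsTwist (τ : H R n p d ε q Q ≃ₐ[R] H R n p d ε q Q) : Prop :=
  τ (T R n p d ε q Q 0) = algebraMap R (H R n p d ε q Q) ε * T R n p d ε q Q 0 ∧
    ∀ i : ℕ, 1 ≤ i → i ≤ n - 1 → τ (T R n p d ε q Q i) = T R n p d ε q Q i

theorem isTwist_sigmaEquiv (hp : 1 ≤ p) (hε : ε ^ p = 1) :
    IsTwist ε (sigmaEquiv (n := n) (q := q) (Q := Q) hp hε) :=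
  ⟨sigma_T hε 0, fun i hi _ => (sigma_T hε i).trans (sigmaGen_of_ne_zero (by omega))⟩

theorem IsTwist.eq {τ τ' : H R n p d ε q Q ≃ₐ[R] H R n p d ε q Q} (hτ : IsTwist ε τ)
    (hτ' : IsTwist ε τ') : τ = τ' :=
  AlgEquiv.coe_toAlgHom_injective <| algHom_ext fun i hi => by
    rcases eq_or_ne i 0 with rfl | h0
    · exact hτ.1.trans hτ'.1.symm
    · exact (hτ.2 i (by omega) (by omega)).trans (hτ'.2 i (by omega) (by omega)).symm

theorem IsTwist.apply_L {τ : H R n p d ε q Q ≃ₐ[R] H R n p d ε q Q} (hτ : IsTwist ε τ) :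
    ∀ k : ℕ, 1 ≤ k → k ≤ n →
      τ (L R n p d ε q Q k) = algebraMap R (H R n p d ε q Q) ε * L R n p d ε q Q k
  | 0, h, _ => by omega
  | 1, _, _ => hτ.1
  | k + 2, _, hk => by
    rw [L, map_mul, map_mul, map_mul, AlgEquiv.commutes, hτ.2 (k + 1) (by omega) (by omega),
      hτ.apply_L (k + 1) (by omega) (by omega)]
    simp only [← Algebra.smul_def, smul_mul_assoc, mul_smul_comm, smul_comm ε]

end AK

theorem stmt_15_general (R : Type*) [CommRing R] (n p d : ℕ) (hp : 2 ≤ p)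
    (ε q : R) (Q : Fin d → R) (hε : IsPrimitiveRoot ε p) :
    (∃! σ : AK.H R n p d ε q Q ≃ₐ[R] AK.H R n p d ε q Q,
      σ (AK.T R n p d ε q Q 0) = algebraMap R (AK.H R n p d ε q Q) ε * AK.T R n p d ε q Q 0 ∧
        ∀ i : ℕ, 1 ≤ i → i ≤ n - 1 → σ (AK.T R n p d ε q Q i) = AK.T R n p d ε q Q i) ∧
    (∀ σ : AK.H R n p d ε q Q ≃ₐ[R] AK.H R n p d ε q Q,
      (σ (AK.T R n p d ε q Q 0) = algebraMap R (AK.H R n p d ε q Q) ε * AK.T R n p d ε q Q 0 ∧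
        ∀ i : ℕ, 1 ≤ i → i ≤ n - 1 → σ (AK.T R n p d ε q Q i) = AK.T R n p d ε q Q i) →
      σ ^ p = 1 ∧
        ∀ k : ℕ, 1 ≤ k → k ≤ n →
          σ (AK.L R n p d ε q Q k) = algebraMap R (AK.H R n p d ε q Q) ε * AK.L R n p d ε q Q k) := by
  have hp₁ : 1 ≤ p := by omega
  have hσ := AK.isTwist_sigmaEquiv (n := n) (q := q) (Q := Q) hp₁ hε.pow_eq_one
  refine ⟨⟨_, hσ, fun τ hτ => AK.IsTwist.eq hτ hσ⟩, fun τ hτ => ⟨?_, AK.IsTwist.apply_L hτ⟩⟩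
  rw [AK.IsTwist.eq hτ hσ, AK.sigmaEquiv_pow]

/-- There is a unique `R`-algebra automorphism `σ` of `H` with
`σ(T_0) = ε T_0` and `σ(T_i) = T_i` for `1 <= i <= n-1`.  Moreover `σ^p` is the identity
automorphism of `H`, and `σ(L_k) = ε L_k` for all `1 <= k <= n`. -/
theorem stmt_15 (R : Type*) [CommRing R] (n p d : ℕ) (hn : 3 ≤ n) (hp : 2 ≤ p) (hd : 1 ≤ d)
    (ε q : R) (Q : Fin d → R) (hε : IsPrimitiveRoot ε p)
    (hq : IsUnit q) (hQ : ∀ i, IsUnit (Q i)) :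
    (∃! σ : AK.H R n p d ε q Q ≃ₐ[R] AK.H R n p d ε q Q,
      σ (AK.T R n p d ε q Q 0) = algebraMap R (AK.H R n p d ε q Q) ε * AK.T R n p d ε q Q 0 ∧
        ∀ i : ℕ, 1 ≤ i → i ≤ n - 1 → σ (AK.T R n p d ε q Q i) = AK.T R n p d ε q Q i) ∧
    (∀ σ : AK.H R n p d ε q Q ≃ₐ[R] AK.H R n p d ε q Q,
      (σ (AK.T R n p d ε q Q 0) = algebraMap R (AK.H R n p d ε q Q) ε * AK.T R n p d ε q Q 0 ∧
        ∀ i : ℕ, 1 ≤ i → i ≤ n - 1 → σ (AK.T R n p d ε q Q i) = AK.T R n p d ε q Q i) →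
      σ ^ p = 1 ∧
        ∀ k : ℕ, 1 ≤ k → k ≤ n →
          σ (AK.L R n p d ε q Q k) = algebraMap R (AK.H R n p d ε q Q) ε * AK.L R n p d ε q Q k) :=
  stmt_15_general R n p d hp ε q Q hε
end
end

section
/- Let σ be the unique R-algebra automorphism of H with σ(T_0) = εT_0 and σ(T_i) = T_i for 1 ≤ i ≤ n−1. Then for 1 ≤ b ≤ n and 1 ≤ s ≤ t ≤ p one has σ(L^(s,t)_{1,b}) = ε^{bd(t−s+1)} L^(s−1,t−1)_{1,b} (superscripts read mod p). Consequently, for any composition b = (b_1, …, b_p) of n into p non-negative parts, σ(v_b) = ε^{−nd} v_b^(−1), and σ(Y_t) = ε^{−d b_t} L^(t, t+p−2)_{1, b_t} T_{b_t, n−b_t} for 1 ≤ t ≤ p (superscripts read mod p). -/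
noncomputable section

/-
`σ` multiplies every Jucys–Murphy element by `ε`: it scales `L_1 = T_0` by `ε` and fixes `q⁻¹` and
`T_k` for `k ≥ 1`, so induction along `L_{k+1} = q⁻¹ T_k L_k T_k` applies. Hence `σ` sends
`L^{(s)}_k = ∏ᵢ (L_k - ε^s Qᵢ) = ∏ᵢ (L_k - ε · ε^{s-1} Qᵢ)` to `ε^d L^{(s-1)}_k`, and it fixes every
`T_{a,b}`. So each product of `L^{(s)}` factors acquires one `ε^d` per factor and has all of its
superscripts lowered by one. For `Y_t` there are `(p - 1) b_t` factors, and for `v_b` a summation by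
parts shows that there are `(p - 1) n` of them; since `ε^p = 1`, `ε^{(p-1)m} = ε^{-m}`.
-/

lemma List.prod_map_range {M : Type*} [CommMonoid M] (f : ℕ → M) (m : ℕ) :
    ((List.range m).map f).prod = ∏ i ∈ Finset.range m, f i := by
  simp [Finset.prod_eq_multiset_prod, Multiset.range]

section AlgebraMapScaling

variable {R A F : Type*} [CommSemiring R] [Semiring A] [Algebra R A]
  [FunLike F A A] [AlgHomClass F R A A] (σ : F)

lemma map_list_prod_of_map_eq_algebraMap_mul {ι : Type*} (l : List ι) {f g : ι → A} {c : ι → R}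
    (h : ∀ i ∈ l, σ (f i) = algebraMap R A (c i) * g i) :
    σ (l.map f).prod = algebraMap R A (l.map c).prod * (l.map g).prod := by
  induction l with
  | nil => simp
  | cons i l ih =>
    simp only [List.map_cons, List.prod_cons, map_mul]
    rw [h i List.mem_cons_self, ih fun j hj => h j (List.mem_cons_of_mem i hj), mul_assoc,
      Algebra.left_comm, ← mul_assoc]

end AlgebraMapScaling

open Polynomial in
lemma aeval_algebraMap_mul_prod_X_sub_C {R A ι : Type*} [CommRing R] [Ring A] [Algebra R A]
    (s : Finset ι) (c : R) (a : ι → R) (x : A) :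
    aeval (algebraMap R A c * x) (∏ i ∈ s, (X - C (c * a i))) =
      algebraMap R A (c ^ s.card) * aeval x (∏ i ∈ s, (X - C (a i))) := by
  -- `A` need not be commutative, so pull out the factors `c` in `R[X]`, after substituting `c X`.
  have hcomp : (∏ i ∈ s, (X - C (c * a i))).comp (C c * X) =
      C (c ^ s.card) * ∏ i ∈ s, (X - C (a i)) := by
    have hfactor (i : ι) : (X - C (c * a i)).comp (C c * X) = C c * (X - C (a i)) := by
      rw [sub_comp, X_comp, C_comp, C_mul, mul_sub]
    rw [prod_comp, Finset.prod_congr rfl fun i _ => hfactor i, Finset.prod_mul_distrib,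
      Finset.prod_const, C_pow]
  rw [show algebraMap R A c * x = aeval x (C c * X) by simp, ← aeval_comp, hcomp, map_mul,
    aeval_C]

namespace AK

lemma Bsum_one_succ (b : ℕ → ℕ) (m : ℕ) : Bsum b 1 (m + 1) = Bsum b 1 m + b (m + 1) :=
  Finset.sum_Icc_succ_top (Nat.le_add_left 1 m) b

lemma le_Bsum (b : ℕ → ℕ) {j k : ℕ} (hj : 1 ≤ j) (hjk : j ≤ k) : b j ≤ Bsum b 1 k :=
  Finset.single_le_sum (fun _ _ => Nat.zero_le _) (Finset.mem_Icc.mpr ⟨hj, hjk⟩)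

lemma Bsum_mono (b : ℕ → ℕ) {j k : ℕ} (hjk : j ≤ k) : Bsum b 1 j ≤ Bsum b 1 k :=
  Finset.sum_le_sum_of_subset (Finset.Icc_subset_Icc_right hjk)

lemma sum_range_reflect_add_Bsum (b : ℕ → ℕ) (m : ℕ) :
    ∑ x ∈ Finset.range m, b (m + 1 - x) * (m - x) + ∑ x ∈ Finset.range m, Bsum b 1 (x + 1) =
      m * Bsum b 1 (m + 1) := by
  have hreflect : ∑ x ∈ Finset.range m, b (m + 1 - x) * (m - x) =
      ∑ x ∈ Finset.range m, b (x + 2) * (x + 1) := by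
    rw [← Finset.sum_range_reflect]
    refine Finset.sum_congr rfl fun x hx => ?_
    rw [Finset.mem_range] at hx
    rw [show m + 1 - (m - 1 - x) = x + 2 by omega, show m - (m - 1 - x) = x + 1 by omega]
  rw [hreflect, ← Finset.sum_add_distrib]
  clear hreflect
  induction m with
  | zero => simp
  | succ m ih => rw [Finset.sum_range_succ, ih, Bsum_one_succ b (m + 1)]; ring

section Epow

variable {R : Type*} [CommRing R] {p : ℕ} {ε : R}

lemma epow_eq_units_zpow (h : ε ^ p = 1) (hp : p ≠ 0) (s : ℤ) :
    epow R p ε s = ↑(Units.ofPowEqOne ε p h hp ^ s) := by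
  rw [zpow_eq_zpow_emod' s (Units.pow_ofPowEqOne h hp),
    ← Int.toNat_of_nonneg (Int.emod_nonneg s (by exact_mod_cast hp)), zpow_natCast,
    Units.val_pow_eq_pow_val, Units.val_ofPowEqOne, epow]

lemma mul_epow (h : ε ^ p = 1) (hp : p ≠ 0) (s : ℤ) : ε * epow R p ε s = epow R p ε (s + 1) := by
  rw [epow_eq_units_zpow h hp, epow_eq_units_zpow h hp, zpow_add_one, Units.val_mul,
    Units.val_ofPowEqOne, mul_comm]

lemma pow_pred_mul_eq_epow_neg (h : ε ^ p = 1) (hp : p ≠ 0) (m : ℕ) :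
    ε ^ ((p - 1) * m) = epow R p ε (-m) := by
  set u := Units.ofPowEqOne ε p h hp
  have hu : u ^ ((p - 1) * m) = u ^ (-(m : ℤ)) := by
    rw [zpow_neg, zpow_natCast, eq_inv_iff_mul_eq_one, ← pow_add, ← add_one_mul,
      Nat.sub_add_cancel (Nat.one_le_iff_ne_zero.mpr hp), pow_mul, Units.pow_ofPowEqOne, one_pow]
  rw [epow_eq_units_zpow h hp, ← hu, Units.val_pow_eq_pow_val, Units.val_ofPowEqOne]

end Epow

section Rotation

open Polynomial

variable {R : Type*} [CommRing R] {n p d : ℕ} {ε q : R} {Q : Fin d → R}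
  {F : Type*} [FunLike F (H R n p d ε q Q) (H R n p d ε q Q)]
  [AlgHomClass F R (H R n p d ε q Q) (H R n p d ε q Q)] {σ : F}

lemma map_L (hσ0 : σ (T R n p d ε q Q 0) = algebraMap R _ ε * T R n p d ε q Q 0)
    (hσi : ∀ i, 1 ≤ i → i ≤ n - 1 → σ (T R n p d ε q Q i) = T R n p d ε q Q i) :
    ∀ {k : ℕ}, 1 ≤ k → k ≤ n → σ (L R n p d ε q Q k) = algebraMap R _ ε * L R n p d ε q Q k
  | 1, _, _ => hσ0
  | k + 2, _, hk => by
    rw [L, map_mul, map_mul, map_mul, AlgHomClass.commutes, hσi (k + 1) (by omega) (by omega),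
      map_L hσ0 hσi (by omega) (by omega)]
    simp only [mul_assoc]
    rw [Algebra.left_comm _ ε, Algebra.left_comm _ ε]

lemma map_Ls (hε : ε ^ p = 1) (hp : p ≠ 0)
    (hσ0 : σ (T R n p d ε q Q 0) = algebraMap R _ ε * T R n p d ε q Q 0)
    (hσi : ∀ i, 1 ≤ i → i ≤ n - 1 → σ (T R n p d ε q Q i) = T R n p d ε q Q i)
    {k : ℕ} (hk1 : 1 ≤ k) (hk : k ≤ n) (s : ℤ) :
    σ (Ls R n p d ε q Q s k) = algebraMap R _ (ε ^ d) * Ls R n p d ε q Q (s - 1) k := by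
  have hshift : ∏ i : Fin d, (X - C (epow R p ε s * Q i)) =
      ∏ i : Fin d, (X - C (ε * (epow R p ε (s - 1) * Q i))) := by
    refine Finset.prod_congr rfl fun i _ => ?_
    rw [← mul_assoc, mul_epow hε hp, sub_add_cancel]
  rw [Ls, ← Polynomial.aeval_algHom_apply, map_L hσ0 hσi hk1 hk, hshift,
    aeval_algebraMap_mul_prod_X_sub_C, Finset.card_univ, Fintype.card_fin, Ls]

lemma map_LLg (hε : ε ^ p = 1) (hp : p ≠ 0)
    (hσ0 : σ (T R n p d ε q Q 0) = algebraMap R _ ε * T R n p d ε q Q 0)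
    (hσi : ∀ i, 1 ≤ i → i ≤ n - 1 → σ (T R n p d ε q Q i) = T R n p d ε q Q i)
    {l m : ℕ} (hl : 1 ≤ l) (hm : m ≤ n) (lo hi : ℤ) :
    σ (LLg R n p d ε q Q lo hi l m) =
      algebraMap R _ (ε ^ ((m + 1 - l) * ((hi + 1 - lo).toNat * d))) *
        LLg R n p d ε q Q (lo - 1) (hi - 1) l m := by
  rw [LLg, LLg, show hi - 1 + 1 - (lo - 1) = hi + 1 - lo by ring]
  set N := (hi + 1 - lo).toNat
  have hrow : ∀ x ∈ List.range (m + 1 - l),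
      σ ((List.range N).map fun y : ℕ => Ls R n p d ε q Q (lo + y) (l + x)).prod =
        algebraMap R _ ((ε ^ d) ^ N) *
          ((List.range N).map fun y : ℕ => Ls R n p d ε q Q (lo - 1 + y) (l + x)).prod := by
    intro x hx
    rw [List.mem_range] at hx
    rw [map_list_prod_of_map_eq_algebraMap_mul σ _ fun y _ => by
      rw [map_Ls hε hp hσ0 hσi (by omega) (by omega), add_sub_right_comm]]
    simp
  rw [map_list_prod_of_map_eq_algebraMap_mul σ _ hrow]
  simp [pow_mul, mul_comm]

lemma map_Tw (hσi : ∀ i, 1 ≤ i → i ≤ n - 1 → σ (T R n p d ε q Q i) = T R n p d ε q Q i)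
    {k a c : ℕ} (h : a + c + k ≤ n) : σ (Tw R n p d ε q Q k a c) = Tw R n p d ε q Q k a c := by
  rw [Tw, map_pow, map_list_prod, List.map_map]
  congr 2
  refine List.map_congr_left fun j hj => hσi _ ?_ ?_ <;> rw [List.mem_range] at hj <;> omega

lemma map_Y (hε : ε ^ p = 1) (hp : p ≠ 0)
    (hσ0 : σ (T R n p d ε q Q 0) = algebraMap R _ ε * T R n p d ε q Q 0)
    (hσi : ∀ i, 1 ≤ i → i ≤ n - 1 → σ (T R n p d ε q Q i) = T R n p d ε q Q i)
    {b : ℕ → ℕ} {t : ℕ} (hb : b t ≤ n) :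
    σ (Y R n p d ε q Q b t) = algebraMap R _ (ε ^ ((p - 1) * (d * b t))) *
      (LLg R n p d ε q Q t (t + p - 2) 1 (b t) * Tw R n p d ε q Q 0 (b t) (n - b t)) := by
  rw [Y, map_mul, map_LLg hε hp hσ0 hσi le_rfl hb, map_Tw hσi (by omega), mul_assoc,
    show (t : ℤ) + p - 1 + 1 - (t + 1) = ((p - 1 : ℕ) : ℤ) by omega, Int.toNat_natCast,
    add_sub_cancel_right, show (t : ℤ) + p - 1 - 1 = t + p - 2 by ring, Nat.add_sub_cancel]
  ring_nf

lemma map_v (hε : ε ^ p = 1) (hp : p ≠ 0)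
    (hσ0 : σ (T R n p d ε q Q 0) = algebraMap R _ ε * T R n p d ε q Q 0)
    (hσi : ∀ i, 1 ≤ i → i ≤ n - 1 → σ (T R n p d ε q Q i) = T R n p d ε q Q i)
    {b : ℕ → ℕ} (hb : Bsum b 1 p ≤ n) (t : ℤ) :
    σ (v R n p d ε q Q b t) =
      algebraMap R _ (ε ^ ((p - 1) * (Bsum b 1 p * d))) * v R n p d ε q Q b (t - 1) := by
  have hblock : ∀ x ∈ List.range (p - 1),
      σ (LLg R n p d ε q Q (1 + t) ((p - 1 - x : ℕ) + t) 1 (b (p - x)) *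
          Tw R n p d ε q Q 0 (b (p - x)) (Bsum b 1 (p - 1 - x))) =
        algebraMap R _ (ε ^ (b (p - x) * (p - 1 - x) * d)) *
          (LLg R n p d ε q Q (1 + (t - 1)) ((p - 1 - x : ℕ) + (t - 1)) 1 (b (p - x)) *
            Tw R n p d ε q Q 0 (b (p - x)) (Bsum b 1 (p - 1 - x))) := by
    intro x hx
    rw [List.mem_range] at hx
    have hsplit : Bsum b 1 (p - x) = Bsum b 1 (p - 1 - x) + b (p - x) := by
      rw [show p - x = p - 1 - x + 1 by omega, Bsum_one_succ]
    have hle := Bsum_mono b (show p - x ≤ p by omega)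
    rw [map_mul, map_LLg hε hp hσ0 hσi le_rfl (by omega), map_Tw hσi (by omega), mul_assoc,
      show ((p - 1 - x : ℕ) + t + 1 - (1 + t)).toNat = p - 1 - x by omega, Nat.add_sub_cancel,
      add_sub_assoc, add_sub_assoc, mul_assoc]
  have hcorner : ∀ x ∈ List.range (p - 1),
      σ (Lt R n p d ε q Q ((x : ℤ) + 2 + t) 1 (Bsum b 1 (x + 1))) =
        algebraMap R _ (ε ^ (Bsum b 1 (x + 1) * d)) *
          Lt R n p d ε q Q ((x : ℤ) + 2 + (t - 1)) 1 (Bsum b 1 (x + 1)) := by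
    intro x hx
    rw [List.mem_range] at hx
    rw [Lt, Lt, map_LLg hε hp hσ0 hσi le_rfl ((Bsum_mono b (by omega)).trans hb),
      add_sub_assoc ((x : ℤ) + 2) t 1]
    simp
  have hexp := sum_range_reflect_add_Bsum b (p - 1)
  rw [Nat.sub_add_cancel (Nat.one_le_iff_ne_zero.mpr hp)] at hexp
  rw [v, v, map_mul, map_list_prod_of_map_eq_algebraMap_mul σ _ hblock,
    map_list_prod_of_map_eq_algebraMap_mul σ _ hcorner, mul_assoc, Algebra.left_comm,
    ← mul_assoc, ← map_mul, List.prod_map_range, List.prod_map_range,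
    Finset.prod_pow_eq_pow_sum, Finset.prod_pow_eq_pow_sum, ← pow_add, ← Finset.sum_mul,
    ← Finset.sum_mul, ← add_mul, hexp, mul_assoc]

end Rotation

end AK

theorem stmt_16_general (R : Type*) [CommRing R] (n p d : ℕ) (hp : 2 ≤ p)
    (ε q : R) (Q : Fin d → R) (hε : IsPrimitiveRoot ε p)
    (b : ℕ → ℕ) (hsum : AK.Bsum b 1 p = n)
    (σ : AK.H R n p d ε q Q ≃ₐ[R] AK.H R n p d ε q Q)
    (hσ0 : σ (AK.T R n p d ε q Q 0) = algebraMap R (AK.H R n p d ε q Q) ε * AK.T R n p d ε q Q 0)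
    (hσi : ∀ i : ℕ, 1 ≤ i → i ≤ n - 1 → σ (AK.T R n p d ε q Q i) = AK.T R n p d ε q Q i) :
    (∀ bb s t : ℕ, 1 ≤ bb → bb ≤ n → 1 ≤ s → s ≤ t → t ≤ p →
      σ (AK.LLg R n p d ε q Q (s : ℤ) (t : ℤ) 1 bb) =
        algebraMap R (AK.H R n p d ε q Q) (ε ^ (bb * d * (t - s + 1))) *
          AK.LLg R n p d ε q Q ((s : ℤ) - 1) ((t : ℤ) - 1) 1 bb) ∧
    σ (AK.v R n p d ε q Q b 0) =
      algebraMap R (AK.H R n p d ε q Q) (AK.epow R p ε (-((n : ℤ) * (d : ℤ)))) *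
        AK.v R n p d ε q Q b (-1) ∧
    (∀ t : ℕ, 1 ≤ t → t ≤ p →
      σ (AK.Y R n p d ε q Q b t) =
        algebraMap R (AK.H R n p d ε q Q) (AK.epow R p ε (-((d : ℤ) * (b t : ℤ)))) *
          (AK.LLg R n p d ε q Q (t : ℤ) ((t : ℤ) + (p : ℤ) - 2) 1 (b t) *
            AK.Tw R n p d ε q Q 0 (b t) (n - b t))) := by
  have h1 : ε ^ p = 1 := hε.pow_eq_one
  have hp0 : p ≠ 0 := by omega
  refine ⟨fun bb s t _ hbb _ hst _ => ?_, ?_, fun t ht1 htp => ?_⟩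
  · rw [AK.map_LLg h1 hp0 hσ0 hσi le_rfl hbb, Nat.add_sub_cancel,
      show ((t : ℤ) + 1 - s).toNat = t - s + 1 by omega]
    ring_nf
  · rw [AK.map_v h1 hp0 hσ0 hσi hsum.le, AK.pow_pred_mul_eq_epow_neg h1 hp0, hsum, zero_sub,
      Nat.cast_mul]
  · rw [AK.map_Y h1 hp0 hσ0 hσi (hsum ▸ AK.le_Bsum b ht1 htp),
      AK.pow_pred_mul_eq_epow_neg h1 hp0, Nat.cast_mul]

/-- Let `σ` be the unique `R`-algebra automorphism of `H` with
`σ(T_0) = ε T_0` and `σ(T_i) = T_i` for `1 <= i <= n-1`.  Then for `1 <= bb <= n` and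
`1 <= s <= t <= p` one has `σ(L^(s,t)_(1,bb)) = ε^(bb d (t-s+1)) L^(s-1,t-1)_(1,bb)`
(superscripts read modulo `p`).  Consequently, for any composition `b` of `n` into `p`
non-negative parts, `σ(v_b) = ε^(-n d) v_b^(-1)` and
`σ(Y_t) = ε^(-d b_t) L^(t,t+p-2)_(1,b_t) T_(b_t, n-b_t)` for `1 <= t <= p`. -/
theorem stmt_16 (R : Type*) [CommRing R] (n p d : ℕ) (hn : 3 ≤ n) (hp : 2 ≤ p) (hd : 1 ≤ d)
    (ε q : R) (Q : Fin d → R) (hε : IsPrimitiveRoot ε p)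
    (hq : IsUnit q) (hQ : ∀ i, IsUnit (Q i))
    (b : ℕ → ℕ) (hper : ∀ i, b (i + p) = b i) (hsum : AK.Bsum b 1 p = n)
    (σ : AK.H R n p d ε q Q ≃ₐ[R] AK.H R n p d ε q Q)
    (hσ0 : σ (AK.T R n p d ε q Q 0) = algebraMap R (AK.H R n p d ε q Q) ε * AK.T R n p d ε q Q 0)
    (hσi : ∀ i : ℕ, 1 ≤ i → i ≤ n - 1 → σ (AK.T R n p d ε q Q i) = AK.T R n p d ε q Q i) :
    (∀ bb s t : ℕ, 1 ≤ bb → bb ≤ n → 1 ≤ s → s ≤ t → t ≤ p →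
      σ (AK.LLg R n p d ε q Q (s : ℤ) (t : ℤ) 1 bb) =
        algebraMap R (AK.H R n p d ε q Q) (ε ^ (bb * d * (t - s + 1))) *
          AK.LLg R n p d ε q Q ((s : ℤ) - 1) ((t : ℤ) - 1) 1 bb) ∧
    σ (AK.v R n p d ε q Q b 0) =
      algebraMap R (AK.H R n p d ε q Q) (AK.epow R p ε (-((n : ℤ) * (d : ℤ)))) *
        AK.v R n p d ε q Q b (-1) ∧
    (∀ t : ℕ, 1 ≤ t → t ≤ p →
      σ (AK.Y R n p d ε q Q b t) =
        algebraMap R (AK.H R n p d ε q Q) (AK.epow R p ε (-((d : ℤ) * (b t : ℤ)))) *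
          (AK.LLg R n p d ε q Q (t : ℤ) ((t : ℤ) + (p : ℤ) - 2) 1 (b t) *
            AK.Tw R n p d ε q Q 0 (b t) (n - b t))) :=
  stmt_16_general R n p d hp ε q Q hε b hsum σ hσ0 hσi
end
end

section
/- Let λ and μ be r-multipartitions of n, let s be a standard λ-tableau and t a standard μ-tableau. Then s = t (in particular λ = μ) if and only if cont_s(k) = cont_t(k) for all 1 ≤ k ≤ n. -/
/-!
By induction on `k`, the entries `1, …, k` occupy the same boxes in `s` and in `t`. Since `ε̇` is
a primitive `p`-th root of unity and `q̇, Q̇_1, …, Q̇_d` are independent indeterminates, the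
content of a box determines its component and its diagonal `b - a`. So `k` lies at `(a, b)` in
`s` and at `(a', b')` in `t` with `b - a = b' - a'`. If `a < a'`, then `b < b'` and the box
`(a' - 1, b')` holds an entry of `t` smaller than `k`, which by induction is the entry of `s` in
that box; but in `s` this box lies weakly below and strictly to the right of `(a, b)`, so its
entry exceeds `k`. By symmetry `a = a'`.
-/

noncomputable section

namespace MPT

open scoped Classical

/-- The field `ℚ(ε̇)`, where `ε̇ ∈ ℂ`. -/
def Kf (ε : ℂ) : IntermediateField ℚ ℂ := IntermediateField.adjoin ℚ {ε}

/-- The field `F = ℚ(ε̇)(q̇, Q̇_1, …, Q̇_d)` of rational functions over `ℚ(ε̇)` in the `d + 1`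
algebraically independent indeterminates `q̇, Q̇_1, …, Q̇_d`. -/
abbrev F (ε : ℂ) (d : ℕ) : Type :=
  FractionRing (MvPolynomial (Fin (d + 1)) (Kf ε))

/-- `ε̇` as an element of `F`. -/
def edot (ε : ℂ) (d : ℕ) : F ε d :=
  algebraMap (MvPolynomial (Fin (d + 1)) (Kf ε)) (F ε d)
    (MvPolynomial.C ⟨ε, IntermediateField.subset_adjoin ℚ {ε} rfl⟩)

/-- The indeterminate `q̇` in `F`. -/
def qdot (ε : ℂ) (d : ℕ) : F ε d :=
  algebraMap (MvPolynomial (Fin (d + 1)) (Kf ε)) (F ε d)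
    (MvPolynomial.X (⟨0, Nat.succ_pos d⟩ : Fin (d + 1)))

/-- The indeterminate `Q̇_c` in `F`, for `1 ≤ c ≤ d`. -/
def Qdot (ε : ℂ) (d : ℕ) (c : ℕ) : F ε d :=
  algebraMap (MvPolynomial (Fin (d + 1)) (Kf ε)) (F ε d)
    (MvPolynomial.X (⟨c % (d + 1), Nat.mod_lt c (Nat.succ_pos d)⟩ : Fin (d + 1)))

/-- The content `ε̇^j q̇^(b-a) Q̇_c ∈ F` of a box in row `a` and column `b` of component number
`comp = c + j*d` (components numbered `1, …, r` with `1 ≤ c ≤ d` and `0 ≤ j ≤ p-1`). -/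
def contpos (ε : ℂ) (d : ℕ) (a b comp : ℕ) : F ε d :=
  edot ε d ^ ((comp - 1) / d) * qdot ε d ^ ((b : ℤ) - (a : ℤ)) * Qdot ε d ((comp - 1) % d + 1)

/-- `lam` is an `r`-multipartition of `n`: `lam c` is the `c`-th component for `1 ≤ c ≤ r`
(rows indexed from `1`), an out-of-range datum vanishes, each component is a partition, and the
sizes of the components sum to `n`. -/
def IsMultipartition (r n : ℕ) (lam : ℕ → ℕ → ℕ) : Prop :=
  (∀ c a : ℕ, c < 1 ∨ r < c → lam c a = 0) ∧
  (∀ c : ℕ, lam c 0 = 0) ∧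
  (∀ c a : ℕ, 1 ≤ a → lam c (a + 1) ≤ lam c a) ∧
  (∀ c a : ℕ, n < a → lam c a = 0) ∧
  (∑ c ∈ Finset.Icc 1 r, ∑ a ∈ Finset.Icc 1 n, lam c a = n)

/-- `(a, b, c)` is a box of the diagram `[lam]`: row `a ≥ 1`, column `1 ≤ b ≤ lam c a`,
component `c`. -/
def InDiag (lam : ℕ → ℕ → ℕ) (a b c : ℕ) : Prop :=
  1 ≤ a ∧ 1 ≤ b ∧ b ≤ lam c a

/-- `s` is a standard `lam`-tableau: a bijection from the diagram of `lam` onto `{1, …, n}`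
(extended by `0` off the diagram) whose entries increase along each row and down each column of
every component. -/
def IsStdTableau (n : ℕ) (lam : ℕ → ℕ → ℕ) (s : ℕ → ℕ → ℕ → ℕ) : Prop :=
  (∀ a b c : ℕ, ¬ InDiag lam a b c → s a b c = 0) ∧
  (∀ a b c : ℕ, InDiag lam a b c → 1 ≤ s a b c ∧ s a b c ≤ n) ∧
  (∀ k : ℕ, 1 ≤ k → k ≤ n →
    ∃! x : ℕ × ℕ × ℕ, InDiag lam x.1 x.2.1 x.2.2 ∧ s x.1 x.2.1 x.2.2 = k) ∧
  (∀ a b c : ℕ, InDiag lam a b c → InDiag lam a (b + 1) c → s a b c < s a (b + 1) c) ∧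
  (∀ a b c : ℕ, InDiag lam a b c → InDiag lam (a + 1) b c → s a b c < s (a + 1) b c)

/-- The content `cont_s(k) ∈ F` of `k` in the standard tableau `s`: the content of the box of
the diagram in which `k` appears. -/
def cont (ε : ℂ) (d : ℕ) (lam : ℕ → ℕ → ℕ) (s : ℕ → ℕ → ℕ → ℕ) (k : ℕ) : F ε d :=
  if h : ∃ x : ℕ × ℕ × ℕ, InDiag lam x.1 x.2.1 x.2.2 ∧ s x.1 x.2.1 x.2.2 = k then
    contpos ε d h.choose.1 h.choose.2.1 h.choose.2.2
  else 0

end MPT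

namespace MvPolynomial

variable {σ R : Type*}

theorem C_mul_X_pow_mul_X_inj [CommSemiring R] {i k k' : σ} (hk : k ≠ i) (hk' : k' ≠ i)
    {a a' : R} (ha : a ≠ 0) {m m' : ℕ} :
    C a * X i ^ m * X k = C a' * X i ^ m' * X k' ↔ a = a' ∧ m = m' ∧ k = k' := by
  refine ⟨fun h => ?_, by rintro ⟨rfl, rfl, rfl⟩; rfl⟩
  have hmon (b : R) (e : ℕ) (l : σ) :
      C b * X i ^ e * X l = monomial (Finsupp.single i e + Finsupp.single l 1) b := by
    rw [C_mul_X_pow_eq_monomial, X, monomial_mul, mul_one]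
  rw [hmon, hmon, monomial_eq_monomial_iff] at h
  obtain ⟨hexp, rfl⟩ | ⟨rfl, -⟩ := h
  · have hm : m = m' := by
      simpa [Finsupp.single_apply, hk, hk'] using DFunLike.congr_fun hexp i
    subst hm
    exact ⟨rfl, rfl, (Finsupp.single_left_inj one_ne_zero).1 (add_left_cancel hexp)⟩
  · exact absurd rfl ha

theorem map_C_mul_map_X_zpow_mul_map_X_inj [CommRing R] [Nontrivial R] {K : Type*} [Field K]
    {f : MvPolynomial σ R →+* K} (hf : Function.Injective f) {i k k' : σ} (hk : k ≠ i)
    (hk' : k' ≠ i) {a a' : R} (ha : a ≠ 0) {m m' : ℤ} :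
    f (C a) * f (X i) ^ m * f (X k) = f (C a') * f (X i) ^ m' * f (X k') ↔
      a = a' ∧ m = m' ∧ k = k' := by
  refine ⟨fun h => ?_, by rintro ⟨rfl, rfl, rfl⟩; rfl⟩
  have hX : f (X i) ≠ 0 := (map_ne_zero_iff f hf).2 (X_ne_zero i)
  -- multiplying by `X i ^ N` clears the negative powers
  set N : ℕ := m.natAbs + m'.natAbs
  have hpoly : C a * X i ^ (m + N).toNat * X k = C a' * X i ^ (m' + N).toNat * X k' := by
    apply hf
    simp only [map_mul, map_pow, ← zpow_natCast]
    rw [Int.toNat_of_nonneg (by omega), Int.toNat_of_nonneg (by omega), zpow_add₀ hX,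
      zpow_add₀ hX]
    linear_combination f (X i) ^ (N : ℤ) * h
  obtain ⟨rfl, hm, rfl⟩ := (C_mul_X_pow_mul_X_inj hk hk' ha).1 hpoly
  exact ⟨rfl, by omega, rfl⟩

end MvPolynomial

namespace MPT

theorem edot_pow_mul_qdot_zpow_mul_Qdot_inj {ε : ℂ} (hε : ε ≠ 0) {d j j' c c' : ℕ} {m m' : ℤ}
    (hc₁ : 1 ≤ c) (hc₂ : c ≤ d) (hc₁' : 1 ≤ c') (hc₂' : c' ≤ d) :
    edot ε d ^ j * qdot ε d ^ m * Qdot ε d c = edot ε d ^ j' * qdot ε d ^ m' * Qdot ε d c' ↔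
      ε ^ j = ε ^ j' ∧ m = m' ∧ c = c' := by
  set e : Kf ε := ⟨ε, IntermediateField.subset_adjoin ℚ {ε} rfl⟩
  have he : e ≠ 0 := fun h => hε (congrArg Subtype.val h)
  have hQ (l : ℕ) (hl : l ≤ d) :
      Qdot ε d l = algebraMap (MvPolynomial (Fin (d + 1)) (Kf ε)) (F ε d) (.X ⟨l, by omega⟩) := by
    simp only [Qdot, Nat.mod_eq_of_lt (show l < d + 1 by omega)]
  simp only [edot, qdot, hQ c hc₂, hQ c' hc₂', ← map_pow]
  rw [MvPolynomial.map_C_mul_map_X_zpow_mul_map_X_inj (IsFractionRing.injective _ _)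
      (by simp [Fin.ext_iff]; omega) (by simp [Fin.ext_iff]; omega) (pow_ne_zero j he)]
  simp [e, Subtype.ext_iff, Fin.ext_iff]

theorem eq_of_contpos_eq {ε : ℂ} {p d : ℕ} (hε : IsPrimitiveRoot ε p) {a b c a' b' c' : ℕ}
    (hc₁ : 1 ≤ c) (hc₂ : c ≤ p * d) (hc₁' : 1 ≤ c') (hc₂' : c' ≤ p * d)
    (h : contpos ε d a b c = contpos ε d a' b' c') :
    c = c' ∧ (b : ℤ) - a = (b' : ℤ) - a' := by
  have hd : 0 < d := Nat.pos_of_mul_pos_left (by omega : 0 < p * d)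
  have hp : 0 < p := Nat.pos_of_mul_pos_right (by omega : 0 < p * d)
  have hj {l : ℕ} (hl₁ : 1 ≤ l) (hl₂ : l ≤ p * d) : (l - 1) / d < p :=
    (Nat.div_lt_iff_lt_mul hd).2 (by omega)
  obtain ⟨hpow, hdiag, hmod⟩ := (edot_pow_mul_qdot_zpow_mul_Qdot_inj (hε.ne_zero hp.ne')
    (by omega) (Nat.mod_lt _ hd) (by omega) (Nat.mod_lt _ hd)).1 h
  have hdiv := hε.pow_inj (hj hc₁ hc₂) (hj hc₁' hc₂') hpow
  refine ⟨?_, hdiag⟩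
  have : c - 1 = c' - 1 := by
    rw [← Nat.div_add_mod (c - 1) d, ← Nat.div_add_mod (c' - 1) d, hdiv, Nat.succ_inj.1 hmod]
  omega

section Tableau

variable {r n : ℕ} {lam mu : ℕ → ℕ → ℕ} {s t : ℕ → ℕ → ℕ → ℕ}

theorem IsMultipartition.comp_mem (hlam : IsMultipartition r n lam) {a b c : ℕ}
    (h : InDiag lam a b c) : 1 ≤ c ∧ c ≤ r := by
  by_contra hc
  have := hlam.1 c a (by omega)
  obtain ⟨-, hb, hle⟩ := h
  omega

theorem IsMultipartition.antitone (hlam : IsMultipartition r n lam) {c a a' : ℕ} (ha : 1 ≤ a)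
    (h : a ≤ a') : lam c a' ≤ lam c a := by
  induction a', h using Nat.le_induction with
  | base => exact le_rfl
  | succ a' ha' ih => exact (hlam.2.2.1 c a' (ha.trans ha')).trans ih

theorem InDiag.of_le (hlam : IsMultipartition r n lam) {a b a' b' c : ℕ}
    (h : InDiag lam a' b' c) (ha₁ : 1 ≤ a) (hb₁ : 1 ≤ b) (ha : a ≤ a') (hb : b ≤ b') :
    InDiag lam a b c :=
  ⟨ha₁, hb₁, hb.trans (h.2.2.trans (hlam.antitone ha₁ ha))⟩

theorem IsStdTableau.exists_inDiag (hs : IsStdTableau n lam s) {k : ℕ} (hk₁ : 1 ≤ k)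
    (hkn : k ≤ n) : ∃ a b c, InDiag lam a b c ∧ s a b c = k := by
  obtain ⟨⟨a, b, c⟩, hx, -⟩ := hs.2.2.1 k hk₁ hkn
  exact ⟨a, b, c, hx⟩

theorem IsStdTableau.cont_apply (hs : IsStdTableau n lam s) (ε : ℂ) (d : ℕ) {a b c : ℕ}
    (hx : InDiag lam a b c) : cont ε d lam s (s a b c) = contpos ε d a b c := by
  have hex : ∃ x : ℕ × ℕ × ℕ, InDiag lam x.1 x.2.1 x.2.2 ∧ s x.1 x.2.1 x.2.2 = s a b c :=
    ⟨(a, b, c), hx, rfl⟩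
  obtain ⟨hk₁, hkn⟩ := hs.2.1 a b c hx
  obtain ⟨_, -, huniq⟩ := hs.2.2.1 _ hk₁ hkn
  rw [cont, dif_pos hex, huniq _ hex.choose_spec, ← huniq (a, b, c) ⟨hx, rfl⟩]

theorem IsStdTableau.mono_row (hs : IsStdTableau n lam s) {a b b' c : ℕ} (hb₁ : 1 ≤ b)
    (hb : b ≤ b') (h : InDiag lam a b' c) : s a b c ≤ s a b' c := by
  induction b', hb using Nat.le_induction with
  | base => exact le_rfl
  | succ b' hb ih =>
    have h' : InDiag lam a b' c := ⟨h.1, hb₁.trans hb, by have := h.2.2; omega⟩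
    exact (ih h').trans (hs.2.2.2.1 a b' c h' h).le

theorem IsStdTableau.mono_col (hlam : IsMultipartition r n lam) (hs : IsStdTableau n lam s)
    {a a' b c : ℕ} (ha₁ : 1 ≤ a) (ha : a ≤ a') (h : InDiag lam a' b c) :
    s a b c ≤ s a' b c := by
  induction a', ha using Nat.le_induction with
  | base => exact le_rfl
  | succ a' ha ih =>
    have h' : InDiag lam a' b c := h.of_le hlam (ha₁.trans ha) h.2.1 (by omega) le_rfl
    exact (ih h').trans (hs.2.2.2.2 a' b c h' h).le

theorem IsStdTableau.lt_of_le_of_lt (hlam : IsMultipartition r n lam) (hs : IsStdTableau n lam s)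
    {a b a' b' c : ℕ} (hx : InDiag lam a b c) (hy : InDiag lam a' b' c) (ha : a ≤ a')
    (hb : b < b') : s a b c < s a' b' c := by
  have hx' : InDiag lam a b' c := hy.of_le hlam hx.1 (by omega) ha le_rfl
  calc s a b c < s a (b + 1) c := hs.2.2.2.1 a b c hx (hx'.of_le hlam hx.1 (by omega) le_rfl hb)
    _ ≤ s a b' c := hs.mono_row (by omega) hb hx'
    _ ≤ s a' b' c := hs.mono_col hlam hx.1 ha hy

def EmbedsBelow (k : ℕ) (lam : ℕ → ℕ → ℕ) (s : ℕ → ℕ → ℕ → ℕ) (mu : ℕ → ℕ → ℕ)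
    (t : ℕ → ℕ → ℕ → ℕ) : Prop :=
  ∀ a b c, InDiag lam a b c → s a b c < k → InDiag mu a b c ∧ t a b c = s a b c

theorem IsStdTableau.row_le_of_embedsBelow (hlam : IsMultipartition r n lam)
    (hmu : IsMultipartition r n mu) (hs : IsStdTableau n lam s) (ht : IsStdTableau n mu t)
    {k : ℕ} (hemb : EmbedsBelow k mu t lam s) {a b c a' b' : ℕ} (hx : InDiag lam a b c)
    (hsx : s a b c = k) (hy : InDiag mu a' b' c) (hty : t a' b' c = k)
    (hdiag : (b : ℤ) - a = (b' : ℤ) - a') : a' ≤ a := by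
  by_contra! hlt
  obtain ⟨a₀, rfl⟩ : ∃ a₀, a' = a₀ + 1 := ⟨a' - 1, by omega⟩
  have hy₀ : InDiag mu a₀ b' c := hy.of_le hmu (by have := hx.1; omega) hy.2.1 (by omega) le_rfl
  have htlt : t a₀ b' c < k := hty ▸ ht.2.2.2.2 a₀ b' c hy₀ hy
  obtain ⟨hx₀, hst⟩ := hemb a₀ b' c hy₀ htlt
  have := hs.lt_of_le_of_lt hlam hx hx₀ (by omega) (by omega)
  omega

theorem IsStdTableau.embedsBelow_succ {ε : ℂ} {p d : ℕ} (hε : IsPrimitiveRoot ε p)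
    (hlam : IsMultipartition (p * d) n lam) (hmu : IsMultipartition (p * d) n mu)
    (hs : IsStdTableau n lam s) (ht : IsStdTableau n mu t)
    (hcont : ∀ k, 1 ≤ k → k ≤ n → cont ε d lam s k = cont ε d mu t k) {k : ℕ}
    (hst : EmbedsBelow k lam s mu t) (hts : EmbedsBelow k mu t lam s) :
    EmbedsBelow (k + 1) lam s mu t := by
  intro a b c hx hk
  rcases Nat.lt_succ_iff_lt_or_eq.1 hk with hk | rfl
  · exact hst a b c hx hk
  obtain ⟨hk₁, hkn⟩ := hs.2.1 a b c hx
  obtain ⟨a', b', c', hy, hty⟩ := ht.exists_inDiag hk₁ hkn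
  have hc := hcont _ hk₁ hkn
  rw [hs.cont_apply ε d hx, ← hty, ht.cont_apply ε d hy] at hc
  obtain ⟨rfl, hdiag⟩ := eq_of_contpos_eq hε (hlam.comp_mem hx).1 (hlam.comp_mem hx).2
    (hmu.comp_mem hy).1 (hmu.comp_mem hy).2 hc
  have ha' := hs.row_le_of_embedsBelow hlam hmu ht hts hx rfl hy hty hdiag
  have ha := ht.row_le_of_embedsBelow hmu hlam hs hst hy hty hx rfl hdiag.symm
  obtain ⟨rfl, rfl⟩ : a' = a ∧ b' = b := ⟨by omega, by omega⟩
  exact ⟨hy, hty⟩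

theorem IsStdTableau.embedsBelow_of_cont_eq {ε : ℂ} {p d : ℕ} (hε : IsPrimitiveRoot ε p)
    (hlam : IsMultipartition (p * d) n lam) (hmu : IsMultipartition (p * d) n mu)
    (hs : IsStdTableau n lam s) (ht : IsStdTableau n mu t)
    (hcont : ∀ k, 1 ≤ k → k ≤ n → cont ε d lam s k = cont ε d mu t k) (k : ℕ) :
    EmbedsBelow k lam s mu t ∧ EmbedsBelow k mu t lam s := by
  induction k with
  | zero => exact ⟨fun _ _ _ _ h => absurd h (Nat.not_lt_zero _),
      fun _ _ _ _ h => absurd h (Nat.not_lt_zero _)⟩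
  | succ k ih =>
    exact ⟨hs.embedsBelow_succ hε hlam hmu ht hcont ih.1 ih.2,
      ht.embedsBelow_succ hε hmu hlam hs (fun k hk₁ hkn => (hcont k hk₁ hkn).symm) ih.2 ih.1⟩

theorem EmbedsBelow.le (hlam : IsMultipartition r n lam) (hs : IsStdTableau n lam s)
    (h : EmbedsBelow (n + 1) lam s mu t) (c a : ℕ) : lam c a ≤ mu c a := by
  rcases Nat.eq_zero_or_pos a with rfl | ha
  · simp [hlam.2.1 c]
  rcases Nat.eq_zero_or_pos (lam c a) with h0 | h0
  · omega
  have hx : InDiag lam a (lam c a) c := ⟨ha, h0, le_rfl⟩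
  exact (h a _ c hx (Nat.lt_succ_of_le (hs.2.1 _ _ _ hx).2)).1.2.2

theorem EmbedsBelow.eq (hlam : IsMultipartition r n lam) (hmu : IsMultipartition r n mu)
    (hs : IsStdTableau n lam s) (ht : IsStdTableau n mu t)
    (hst : EmbedsBelow (n + 1) lam s mu t) (hts : EmbedsBelow (n + 1) mu t lam s) :
    s = t ∧ lam = mu := by
  refine ⟨funext₃ fun a b c => ?_,
    funext₂ fun c a => (hst.le hlam hs c a).antisymm (hts.le hmu ht c a)⟩
  by_cases hx : InDiag lam a b c
  · exact (hst a b c hx (Nat.lt_succ_of_le (hs.2.1 a b c hx).2)).2.symm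
  by_cases hy : InDiag mu a b c
  · exact absurd (hts a b c hy (Nat.lt_succ_of_le (ht.2.1 a b c hy).2)).1 hx
  rw [hs.1 a b c hx, ht.1 a b c hy]

end Tableau

end MPT

theorem stmt_17_general (n p d : ℕ)
    (ε : ℂ) (hε : IsPrimitiveRoot ε p)
    (lam mu : ℕ → ℕ → ℕ)
    (hlam : MPT.IsMultipartition (p * d) n lam) (hmu : MPT.IsMultipartition (p * d) n mu)
    (s t : ℕ → ℕ → ℕ → ℕ)
    (hs : MPT.IsStdTableau n lam s) (ht : MPT.IsStdTableau n mu t) :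
    (s = t ∧ lam = mu) ↔
      ∀ k : ℕ, 1 ≤ k → k ≤ n → MPT.cont ε d lam s k = MPT.cont ε d mu t k := by
  refine ⟨by rintro ⟨rfl, rfl⟩ _ _ _; rfl, fun hcont => ?_⟩
  obtain ⟨hst, hts⟩ := hs.embedsBelow_of_cont_eq hε hlam hmu ht hcont (n + 1)
  exact hst.eq hlam hmu hs ht hts

/-- Fix `n, p, d ≥ 1` and `r = p * d`; let `ε̇ ∈ ℂ` be a primitive `p`-th root
of unity and `F = ℚ(ε̇)(q̇, Q̇_1, …, Q̇_d)`.  Let `λ` and `μ` be `r`-multipartitions of `n`, let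
`s` be a standard `λ`-tableau and `t` a standard `μ`-tableau.  Then `s = t` (in particular
`λ = μ`) if and only if `cont_s(k) = cont_t(k)` for all `1 ≤ k ≤ n`. -/
theorem stmt_17 (n p d : ℕ) (hn : 1 ≤ n) (hp : 1 ≤ p) (hd : 1 ≤ d)
    (ε : ℂ) (hε : IsPrimitiveRoot ε p)
    (lam mu : ℕ → ℕ → ℕ)
    (hlam : MPT.IsMultipartition (p * d) n lam) (hmu : MPT.IsMultipartition (p * d) n mu)
    (s t : ℕ → ℕ → ℕ → ℕ)
    (hs : MPT.IsStdTableau n lam s) (ht : MPT.IsStdTableau n mu t) :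
    (s = t ∧ lam = mu) ↔
      ∀ k : ℕ, 1 ≤ k → k ≤ n → MPT.cont ε d lam s k = MPT.cont ε d mu t k :=
  stmt_17_general n p d ε hε lam mu hlam hmu s t hs ht
end
end
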